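/- arXiv:2410.06683 — 7 statements merged into one kernel-verified Lean document; each statement's English description precedes it below -/
import Mathlib

section
/- For every integer length bound k ≥ 3 and every (uniform or non-uniform) length function λ, there exists a truthful (k,λ)-BE mechanism that admits approximation ratio k (witnessed by the Greedy mechanism that adds pairwise-disjoint trading cycles in non-decreasing order of length). -/
/-!
Barter exchange (BE) framework, following Emek–Shpiro,
"Barter Exchange with Bounded Trading Cycles".
-/

open Finset

namespace BarterExchange

noncomputable section

/-- The length of the trading cycle of `π` containing agent `i`
(equals `0` when `i` does not partake in `π`). -/
def cycLen {n : ℕ} (π : Equiv.Perm (Fin n)) (i : Fin n) : ℕ :=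
  (π.cycleOf i).support.card

/-- The utility of agent `i` from the exchange `π` under the length function `lam`:
`lam ℓ` if `i` partakes in a trading cycle of length `ℓ`, and `0` otherwise. -/
def utility {n : ℕ} (lam : ℕ → ℝ) (π : Equiv.Perm (Fin n)) (i : Fin n) : ℝ :=
  if π i ≠ i then lam (cycLen π i) else 0

/-- Social welfare of an exchange: the sum of the agents' utilities,
which equals `∑_{trading cycles c} len(c)·λ(len(c))`. -/
def SW {n : ℕ} (lam : ℕ → ℝ) (π : Equiv.Perm (Fin n)) : ℝ :=
  ∑ i, utility lam π i

/-- A wish list vector: `W i ⊆ [n] ∖ {i}`. -/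
def IsWishList {n : ℕ} (W : Fin n → Finset (Fin n)) : Prop :=
  ∀ i, i ∉ W i

/-- `π ∈ Π_W^k`: every partaking agent is sent to an agent on her wish list and
all trading cycles have length at most `k`. -/
def Feasible (k : ℕ) {n : ℕ} (W : Fin n → Finset (Fin n)) (π : Equiv.Perm (Fin n)) : Prop :=
  ∀ i : Fin n, π i ≠ i → π i ∈ W i ∧ cycLen π i ≤ k

/-- A length function for length bound `k`: a non-increasing map `{2,…,k} → (0,1]`. -/
def IsLengthFunction (k : ℕ) (lam : ℕ → ℝ) : Prop :=
  (∀ ℓ : ℕ, 2 ≤ ℓ → ℓ ≤ k → 0 < lam ℓ ∧ lam ℓ ≤ 1) ∧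
    ∀ ℓ ℓ' : ℕ, 2 ≤ ℓ → ℓ ≤ ℓ' → ℓ' ≤ k → lam ℓ' ≤ lam ℓ

/-- A mechanism assigns an exchange to every number of agents and wish list vector. -/
abbrev Mechanism : Type :=
  (n : ℕ) → (Fin n → Finset (Fin n)) → Equiv.Perm (Fin n)

/-- A `(k,λ)`-BE mechanism outputs, on every wish list vector `W`,
an exchange in `Π_W^k` (individual rationality). -/
def IsMechanism (k : ℕ) (f : Mechanism) : Prop :=
  ∀ (n : ℕ) (W : Fin n → Finset (Fin n)), IsWishList W → Feasible k W (f n W)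

/-- Truthfulness: under the subset wish list assumption, no agent can gain by
reporting a strict subset of her true wish list. -/
def Truthful (k : ℕ) (lam : ℕ → ℝ) (f : Mechanism) : Prop :=
  ∀ (n : ℕ) (Wstar W : Fin n → Finset (Fin n)), IsWishList Wstar →
    (∀ j, W j ⊆ Wstar j) → ∀ i : Fin n,
      utility lam (f n W) i ≤ utility lam (f n (Function.update W i (Wstar i))) i

/-- `f` admits approximation ratio `r ≥ 1`: on every wish list vector the social welfare of
`f`'s outcome is at least `1/r` times that of any feasible exchange. -/
def ApproxRatio (k : ℕ) (lam : ℕ → ℝ) (f : Mechanism) (r : ℝ) : Prop :=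
  1 ≤ r ∧
    ∀ (n : ℕ) (Wstar : Fin n → Finset (Fin n)), IsWishList Wstar →
      ∀ π : Equiv.Perm (Fin n), Feasible k Wstar π →
        SW lam (f n Wstar) ≥ (1 / r) * SW lam π

/-!
Truthfulness: enlarging agent `i`'s wish list only makes more cycles through `i` acceptable.
The Greedy runs on the two reports coincide until the first cycle accepted in one run only; that
cycle passes through `i`, and every cycle through `i` the other run accepts afterwards is at least
as long, so `i` does not lose since `λ` is non-increasing.

Approximation: every trading cycle `C` of a feasible exchange `π` is itself a candidate, so by
the time Greedy reaches `C` it has kept a cycle of length at most `len C` meeting `C`. Charge each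
agent of `C` to an agent of that kept cycle, whose utility is at least `λ (len C)`. An agent is
charged only by agents of its own `π`-cycle, hence by at most `k` of them.
-/

section GreedyPacking

variable {α : Type*}

open Classical in
def packStep (v : List α → Prop) (acc : List (List α)) (c : List α) : List (List α) :=
  if v c ∧ ∀ a ∈ acc, a.Disjoint c then acc ++ [c] else acc

def greedyPack (v : List α → Prop) (acc L : List (List α)) : List (List α) :=
  L.foldl (packStep v) acc

variable {v : List α → Prop}

theorem greedyPack_cons (acc : List (List α)) (c : List α) (L : List (List α)) :
    greedyPack v acc (c :: L) = greedyPack v (packStep v acc c) L :=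
  rfl

theorem subset_packStep (acc : List (List α)) (c : List α) : acc ⊆ packStep v acc c := by
  unfold packStep
  split_ifs
  · exact List.subset_append_left _ _
  · exact List.Subset.refl _

theorem subset_greedyPack (L acc : List (List α)) : acc ⊆ greedyPack v acc L := by
  induction L generalizing acc with
  | nil => exact List.Subset.refl _
  | cons c L ih => exact fun d hd => ih _ (subset_packStep acc c hd)

theorem mem_greedyPack {L acc : List (List α)} {d : List α} (hd : d ∈ greedyPack v acc L) :
    d ∈ acc ∨ d ∈ L ∧ v d := by
  induction L generalizing acc with
  | nil => exact Or.inl hd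
  | cons c L ih =>
    rcases ih hd with hd | ⟨hdL, hvd⟩
    · unfold packStep at hd
      split_ifs at hd with hc
      · rcases List.mem_append.1 hd with hd | hd
        · exact Or.inl hd
        · obtain rfl := List.mem_singleton.1 hd
          exact Or.inr ⟨List.mem_cons_self, hc.1⟩
      · exact Or.inl hd
    · exact Or.inr ⟨List.mem_cons_of_mem _ hdL, hvd⟩

theorem pairwise_disjoint_greedyPack {L acc : List (List α)} (hacc : acc.Pairwise List.Disjoint) :
    (greedyPack v acc L).Pairwise List.Disjoint := by
  induction L generalizing acc with
  | nil => exact hacc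
  | cons c L ih =>
    refine ih ?_
    unfold packStep
    split_ifs with hc
    · exact List.pairwise_append.2 ⟨hacc, List.pairwise_singleton _ _,
        fun a ha b hb => (List.mem_singleton.1 hb) ▸ hc.2 a ha⟩
    · exact hacc

theorem mem_greedyPack_or_blocked {L acc : List (List α)} {c : List α} (hv : v c)
    (hL : L.Pairwise (fun a b => a.length ≤ b.length)) (hc : c ∈ L)
    (hacc : ∀ a ∈ acc, a.length ≤ c.length) :
    c ∈ greedyPack v acc L ∨
      ∃ a ∈ greedyPack v acc L, a.length ≤ c.length ∧ ∃ x ∈ a, x ∈ c := by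
  induction L generalizing acc with
  | nil => exact absurd hc List.not_mem_nil
  | cons d L ih =>
    obtain ⟨hdL, hL⟩ := List.pairwise_cons.1 hL
    rw [greedyPack_cons]
    rcases List.mem_cons.1 hc with rfl | hcL
    · by_cases hfree : ∀ a ∈ acc, a.Disjoint c
      · refine Or.inl (subset_greedyPack L _ ?_)
        rw [packStep, if_pos ⟨hv, hfree⟩]
        exact List.mem_append_right _ (List.mem_singleton_self c)
      · push Not at hfree
        obtain ⟨a, ha, hac⟩ := hfree
        exact Or.inr ⟨a, subset_greedyPack L _ (subset_packStep acc c ha), hacc a ha,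
          by simpa [List.Disjoint] using hac⟩
    · refine ih hL hcL fun a ha => ?_
      unfold packStep at ha
      split_ifs at ha
      · rcases List.mem_append.1 ha with ha | ha
        · exact hacc a ha
        · obtain rfl := List.mem_singleton.1 ha
          exact hdL c hcL
      · exact hacc a ha

theorem greedyPack_eq_or_exists_shorter {v' : List α → Prop} {i : α}
    (hle : ∀ c, v c → v' c) (hagree : ∀ c, i ∉ c → v' c → v c) {L acc : List (List α)}
    (hL : L.Pairwise (fun a b => a.length ≤ b.length)) :
    greedyPack v acc L = greedyPack v' acc L ∨
      ∃ c' ∈ greedyPack v' acc L, i ∈ c' ∧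
        ∀ c ∈ greedyPack v acc L, i ∈ c → c'.length ≤ c.length := by
  induction L generalizing acc with
  | nil => exact Or.inl rfl
  | cons d L ih =>
    obtain ⟨hdL, hL⟩ := List.pairwise_cons.1 hL
    rw [greedyPack_cons, greedyPack_cons]
    by_cases hstep : packStep v acc d = packStep v' acc d
    · rw [hstep]
      exact ih hL
    have hd : ¬ (v d ∧ ∀ a ∈ acc, a.Disjoint d) := fun hd =>
      hstep (by rw [packStep, packStep, if_pos hd, if_pos ⟨hle d hd.1, hd.2⟩])
    have hd' : v' d ∧ ∀ a ∈ acc, a.Disjoint d := by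
      by_contra hd'
      exact hstep (by rw [packStep, packStep, if_neg hd, if_neg hd'])
    have hid : i ∈ d := by
      by_contra hid
      exact hd ⟨hagree d hid hd'.1, hd'.2⟩
    rw [packStep, packStep, if_neg hd, if_pos hd']
    refine Or.inr ⟨d, subset_greedyPack L _ (by simp), hid, fun c hc hic => ?_⟩
    rcases mem_greedyPack hc with hc | ⟨hcL, -⟩
    · exact absurd hid (hd'.2 c hc hic)
    · exact hdL c hcL

end GreedyPacking

section DisjointCycles

variable {α : Type*} [DecidableEq α] {R : List (List α)} {c : List α} {x : α}

theorem prod_map_formPerm_apply_of_forall_not_mem (h : ∀ c ∈ R, x ∉ c) :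
    (R.map List.formPerm).prod x = x := by
  induction R with
  | nil => rfl
  | cons a R ih =>
    rw [List.map_cons, List.prod_cons, Equiv.Perm.mul_apply,
      ih fun c hc => h c (List.mem_cons_of_mem _ hc),
      List.formPerm_apply_of_notMem (h a List.mem_cons_self)]

theorem prod_map_formPerm_apply_of_mem (hR : R.Pairwise List.Disjoint) (hc : c ∈ R)
    (hx : x ∈ c) : (R.map List.formPerm).prod x = c.formPerm x := by
  induction R with
  | nil => exact absurd hc List.not_mem_nil
  | cons a R ih =>
    obtain ⟨haR, hR⟩ := List.pairwise_cons.1 hR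
    rw [List.map_cons, List.prod_cons, Equiv.Perm.mul_apply]
    rcases List.mem_cons.1 hc with rfl | hc
    · rw [prod_map_formPerm_apply_of_forall_not_mem fun b hb hxb => haR b hb hx hxb]
    · rw [ih hR hc, List.formPerm_apply_of_notMem fun hxa =>
        haR c hc hxa (List.formPerm_apply_mem_of_mem hx)]

theorem disjoint_formPerm_of_disjoint {a b : List α} (hab : a.Disjoint b) :
    a.formPerm.Disjoint b.formPerm := by
  intro x
  by_cases hx : x ∈ a
  · exact Or.inr (List.formPerm_apply_of_notMem fun hxb => hab hx hxb)
  · exact Or.inl (List.formPerm_apply_of_notMem hx)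

variable [Fintype α]

theorem cycleOf_prod_map_formPerm (hR : R.Pairwise List.Disjoint) (hc : c ∈ R) (hx : x ∈ c) :
    (R.map List.formPerm).prod.cycleOf x = c.formPerm.cycleOf x := by
  induction R with
  | nil => exact absurd hc List.not_mem_nil
  | cons a R ih =>
    obtain ⟨haR, hR⟩ := List.pairwise_cons.1 hR
    have hd : a.formPerm.Disjoint (R.map List.formPerm).prod :=
      Equiv.Perm.disjoint_prod_right _ fun g hg => by
        obtain ⟨b, hb, rfl⟩ := List.mem_map.1 hg
        exact disjoint_formPerm_of_disjoint (haR b hb)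
    rw [List.map_cons, List.prod_cons]
    rcases List.mem_cons.1 hc with rfl | hc
    · exact Equiv.Perm.cycleOf_mul_of_apply_right_eq_self hd.commute x
        (prod_map_formPerm_apply_of_forall_not_mem fun b hb hxb => haR b hb hx hxb)
    · rw [hd.commute.eq, Equiv.Perm.cycleOf_mul_of_apply_right_eq_self hd.symm.commute x
        (List.formPerm_apply_of_notMem fun hxa => haR c hc hxa hx)]
      exact ih hR hc

theorem card_support_cycleOf_prod_map_formPerm (hR : R.Pairwise List.Disjoint) (hc : c ∈ R)
    (hnd : c.Nodup) (h2 : 2 ≤ c.length) (hx : x ∈ c) :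
    ((R.map List.formPerm).prod.cycleOf x).support.card = c.length := by
  rw [cycleOf_prod_map_formPerm hR hc hx, (List.isCycle_formPerm hnd h2).cycleOf_eq
      ((List.formPerm_apply_mem_ne_self_iff c hnd x hx).2 h2),
    List.support_formPerm_of_nodup c hnd fun y hy => by simp [hy] at h2,
    List.toFinset_card_of_nodup hnd]

end DisjointCycles

theorem sum_le_mul_sum_of_card_fiber_le {ι κ R : Type*} [Fintype κ] [DecidableEq κ]
    [CommSemiring R] [PartialOrder R] [IsOrderedRing R]
    {s : Finset ι} {g : ι → κ} {w : ι → R} {u : κ → R} {m : ℕ}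
    (hw : ∀ i ∈ s, w i ≤ u (g i)) (hu : ∀ x, 0 ≤ u x) (hm : ∀ x, #{i ∈ s | g i = x} ≤ m) :
    ∑ i ∈ s, w i ≤ m * ∑ x, u x := by
  calc ∑ i ∈ s, w i
      ≤ ∑ i ∈ s, u (g i) := Finset.sum_le_sum hw
    _ = ∑ x, ∑ i ∈ s with g i = x, u (g i) :=
        (Finset.sum_fiberwise_of_maps_to (fun i _ => Finset.mem_univ (g i)) _).symm
    _ = ∑ x, (#{i ∈ s | g i = x} : R) * u x := by
        refine Finset.sum_congr rfl fun x _ => ?_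
        rw [Finset.sum_congr rfl fun i hi => by rw [(Finset.mem_filter.1 hi).2],
          Finset.sum_const, nsmul_eq_mul]
    _ ≤ ∑ x, (m : R) * u x :=
        Finset.sum_le_sum fun x _ => mul_le_mul_of_nonneg_right (Nat.mono_cast (hm x)) (hu x)
    _ = m * ∑ x, u x := (Finset.mul_sum _ _ _).symm

section Greedy

variable {k n : ℕ} {lam : ℕ → ℝ} {W : Fin n → Finset (Fin n)}

/-- Trading cycles are encoded as duplicate-free lists `c`, acting as `c.formPerm`; every cycle
has one encoding per rotation. -/
def ValidCycle (W : Fin n → Finset (Fin n)) (c : List (Fin n)) : Prop :=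
  ∀ x ∈ c, c.formPerm x ∈ W x

def candidates (k n : ℕ) : List (List (Fin n)) :=
  (((List.finRange n).sublists.flatMap List.permutations).filter
    fun c => 2 ≤ c.length ∧ c.length ≤ k).mergeSort fun a b => a.length ≤ b.length

def chosenCycles (k : ℕ) (W : Fin n → Finset (Fin n)) : List (List (Fin n)) :=
  greedyPack (ValidCycle W) [] (candidates k n)

def greedy (k : ℕ) : Mechanism :=
  fun _ W => ((chosenCycles k W).map List.formPerm).prod

theorem mem_candidates {c : List (Fin n)} :
    c ∈ candidates k n ↔ c.Nodup ∧ 2 ≤ c.length ∧ c.length ≤ k := by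
  have hperm : c ∈ (List.finRange n).sublists.flatMap List.permutations ↔ c.Nodup := by
    simp only [List.mem_flatMap, List.mem_sublists, List.mem_permutations]
    constructor
    · rintro ⟨s, hs, hcs⟩
      exact hcs.nodup_iff.2 (hs.nodup (List.nodup_finRange n))
    · intro hnd
      obtain ⟨s, hsc, hs⟩ := List.subperm_of_subset hnd fun x _ => List.mem_finRange x
      exact ⟨s, hs, hsc.symm⟩
  simp [candidates, List.mem_mergeSort, hperm]

theorem candidates_sorted (k n : ℕ) :
    (candidates k n).Pairwise fun a b => a.length ≤ b.length :=
  (List.pairwise_mergeSort (fun _ _ _ hab hbc => by simp_all; omega)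
    (fun a b => by simpa using Nat.le_total _ _) _).imp fun h => by simpa using h

theorem mem_candidates_of_mem_chosenCycles {c : List (Fin n)} (hc : c ∈ chosenCycles k W) :
    c ∈ candidates k n ∧ ValidCycle W c :=
  (mem_greedyPack hc).resolve_left List.not_mem_nil

theorem pairwise_disjoint_chosenCycles : (chosenCycles k W).Pairwise List.Disjoint :=
  pairwise_disjoint_greedyPack List.Pairwise.nil

theorem greedy_apply_of_mem {c : List (Fin n)} {x : Fin n} (hc : c ∈ chosenCycles k W)
    (hx : x ∈ c) : greedy k n W x = c.formPerm x :=
  prod_map_formPerm_apply_of_mem pairwise_disjoint_chosenCycles hc hx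

theorem cycLen_greedy_of_mem {c : List (Fin n)} {x : Fin n} (hc : c ∈ chosenCycles k W)
    (hx : x ∈ c) : cycLen (greedy k n W) x = c.length := by
  obtain ⟨hnd, h2, -⟩ := mem_candidates.1 (mem_candidates_of_mem_chosenCycles hc).1
  exact card_support_cycleOf_prod_map_formPerm pairwise_disjoint_chosenCycles hc hnd h2 hx

theorem greedy_apply_ne_of_mem {c : List (Fin n)} {x : Fin n} (hc : c ∈ chosenCycles k W)
    (hx : x ∈ c) : greedy k n W x ≠ x := by
  obtain ⟨hnd, h2, -⟩ := mem_candidates.1 (mem_candidates_of_mem_chosenCycles hc).1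
  rw [greedy_apply_of_mem hc hx]
  exact (List.formPerm_apply_mem_ne_self_iff c hnd x hx).2 h2

theorem utility_greedy_of_mem {c : List (Fin n)} {x : Fin n} (hc : c ∈ chosenCycles k W)
    (hx : x ∈ c) : utility lam (greedy k n W) x = lam c.length := by
  rw [utility, if_pos (greedy_apply_ne_of_mem hc hx), cycLen_greedy_of_mem hc hx]

theorem utility_greedy_of_forall_not_mem {x : Fin n} (h : ∀ c ∈ chosenCycles k W, x ∉ c) :
    utility lam (greedy k n W) x = 0 := by
  rw [utility]
  exact if_neg (not_not.2 (prod_map_formPerm_apply_of_forall_not_mem h))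

theorem exists_mem_chosenCycles_of_greedy_apply_ne {x : Fin n} (hx : greedy k n W x ≠ x) :
    ∃ c ∈ chosenCycles k W, x ∈ c := by
  by_contra! h
  exact hx (prod_map_formPerm_apply_of_forall_not_mem h)

theorem greedy_feasible : Feasible k W (greedy k n W) := by
  intro x hx
  obtain ⟨c, hc, hxc⟩ := exists_mem_chosenCycles_of_greedy_apply_ne hx
  obtain ⟨hcand, hvalid⟩ := mem_candidates_of_mem_chosenCycles hc
  rw [greedy_apply_of_mem hc hxc, cycLen_greedy_of_mem hc hxc]
  exact ⟨hvalid x hxc, (mem_candidates.1 hcand).2.2⟩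

theorem lam_nonneg_of_mem_chosenCycles (hlam : IsLengthFunction k lam) {c : List (Fin n)}
    (hc : c ∈ chosenCycles k W) : 0 ≤ lam c.length := by
  obtain ⟨-, h2, hk⟩ := mem_candidates.1 (mem_candidates_of_mem_chosenCycles hc).1
  exact (hlam.1 _ h2 hk).1.le

theorem utility_greedy_nonneg (hlam : IsLengthFunction k lam) (x : Fin n) :
    0 ≤ utility lam (greedy k n W) x := by
  by_cases h : ∃ c ∈ chosenCycles k W, x ∈ c
  · obtain ⟨c, hc, hxc⟩ := h
    rw [utility_greedy_of_mem hc hxc]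
    exact lam_nonneg_of_mem_chosenCycles hlam hc
  · push Not at h
    rw [utility_greedy_of_forall_not_mem h]

theorem ValidCycle.update {i : Fin n} {V : Finset (Fin n)} (hV : W i ⊆ V) {c : List (Fin n)}
    (hc : ValidCycle W c) : ValidCycle (Function.update W i V) c := by
  intro x hx
  rcases eq_or_ne x i with rfl | hxi
  · simpa using hV (hc x hx)
  · simpa [hxi] using hc x hx

theorem ValidCycle.of_update {i : Fin n} {V : Finset (Fin n)} {c : List (Fin n)} (hi : i ∉ c)
    (hc : ValidCycle (Function.update W i V) c) : ValidCycle W c := by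
  intro x hx
  have hxi : x ≠ i := fun h => hi (h ▸ hx)
  simpa [hxi] using hc x hx

theorem utility_greedy_le_update (hlam : IsLengthFunction k lam) {i : Fin n}
    {V : Finset (Fin n)} (hV : W i ⊆ V) :
    utility lam (greedy k n W) i ≤ utility lam (greedy k n (Function.update W i V)) i := by
  rcases greedyPack_eq_or_exists_shorter (fun c => ValidCycle.update hV)
      (fun c hi => ValidCycle.of_update hi) (candidates_sorted k n) with heq | ⟨c', hc', hic', hle⟩
  · exact (congrArg (fun R => utility lam (R.map List.formPerm).prod i) heq).le
  · obtain ⟨-, h2', hk'⟩ := mem_candidates.1 (mem_candidates_of_mem_chosenCycles hc').1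
    rw [utility_greedy_of_mem hc' hic']
    by_cases h : ∃ c ∈ chosenCycles k W, i ∈ c
    · obtain ⟨c, hc, hic⟩ := h
      obtain ⟨-, -, hk⟩ := mem_candidates.1 (mem_candidates_of_mem_chosenCycles hc).1
      rw [utility_greedy_of_mem hc hic]
      exact hlam.2 _ _ h2' (hle c hc hic) hk
    · push Not at h
      rw [utility_greedy_of_forall_not_mem h]
      exact lam_nonneg_of_mem_chosenCycles hlam hc'

theorem exists_mem_chosenCycles_meets {l : List (Fin n)} (hl : l ∈ candidates k n)
    (hv : ValidCycle W l) : ∃ a ∈ chosenCycles k W, a.length ≤ l.length ∧ ∃ x ∈ l, x ∈ a := by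
  rcases mem_greedyPack_or_blocked (acc := []) hv (candidates_sorted k n) hl (by simp)
    with hmem | ⟨a, ha, hal, x, hxa, hxl⟩
  · obtain ⟨x, hx⟩ := List.exists_mem_of_length_pos
      (by have := (mem_candidates.1 hl).2.1; omega : 0 < l.length)
    exact ⟨l, hmem, le_rfl, x, hx, hx⟩
  · exact ⟨a, ha, hal, x, hxl, hxa⟩

variable {π : Equiv.Perm (Fin n)}

theorem cycLen_le_of_feasible (hπ : Feasible k W π) (x : Fin n) : cycLen π x ≤ k := by
  by_cases hx : π x = x
  · simp [cycLen, (Equiv.Perm.cycleOf_eq_one_iff π).2 hx]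
  · exact (hπ x hx).2

theorem toList_mem_candidates_and_valid (hπ : Feasible k W π) {i : Fin n} (hi : π i ≠ i) :
    π.toList i ∈ candidates k n ∧ ValidCycle W (π.toList i) := by
  have hsame : ∀ x ∈ π.toList i, π.SameCycle i x := fun x hx =>
    (Equiv.Perm.mem_toList_iff.1 hx).1
  refine ⟨mem_candidates.2 ⟨Equiv.Perm.nodup_toList π i,
    Equiv.Perm.two_le_length_toList_iff_mem_support.2 (Equiv.Perm.mem_support.2 hi),
    (Equiv.Perm.length_toList π i).trans_le (cycLen_le_of_feasible hπ i)⟩, fun x hx => ?_⟩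
  have hπx : π x ≠ x := fun h => hi ((hsame x hx).apply_eq_self_iff.2 h)
  rw [Equiv.Perm.formPerm_toList, Equiv.Perm.cycleOf_apply, if_pos (hsame x hx)]
  exact (hπ x hπx).1

theorem exists_sameCycle_utility_le (hlam : IsLengthFunction k lam) (hπ : Feasible k W π)
    {i : Fin n} (hi : π i ≠ i) :
    ∃ x, π.SameCycle i x ∧ lam (cycLen π i) ≤ utility lam (greedy k n W) x := by
  obtain ⟨hl, hv⟩ := toList_mem_candidates_and_valid hπ hi
  obtain ⟨a, ha, hal, x, hxl, hxa⟩ := exists_mem_chosenCycles_meets hl hv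
  obtain ⟨-, h2, -⟩ := mem_candidates.1 (mem_candidates_of_mem_chosenCycles ha).1
  refine ⟨x, (Equiv.Perm.mem_toList_iff.1 hxl).1, ?_⟩
  rw [utility_greedy_of_mem ha hxa]
  exact hlam.2 _ _ h2 (hal.trans_eq (Equiv.Perm.length_toList π i))
    (cycLen_le_of_feasible hπ i)

theorem SW_eq_sum_support (π : Equiv.Perm (Fin n)) :
    SW lam π = ∑ i ∈ π.support, lam (cycLen π i) := by
  rw [SW, Equiv.Perm.support, Finset.sum_filter]
  rfl

theorem SW_le_mul_SW_greedy (hlam : IsLengthFunction k lam) (hπ : Feasible k W π) :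
    SW lam π ≤ k * SW lam (greedy k n W) := by
  have hcharge : ∀ i, ∃ x, π i ≠ i →
      π.SameCycle i x ∧ lam (cycLen π i) ≤ utility lam (greedy k n W) x := fun i =>
    if hi : π i ≠ i then (exists_sameCycle_utility_le hlam hπ hi).imp fun _ h _ => h
    else ⟨i, fun h => absurd h hi⟩
  choose g hg using hcharge
  rw [SW_eq_sum_support]
  refine sum_le_mul_sum_of_card_fiber_le
    (fun i hi => (hg i (Equiv.Perm.mem_support.1 hi)).2) (utility_greedy_nonneg hlam) fun x => ?_
  calc #{i ∈ π.support | g i = x} ≤ cycLen π x := by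
        refine Finset.card_le_card fun i hi => ?_
        obtain ⟨hiπ, hgx⟩ := Finset.mem_filter.1 hi
        have hsame := (hg i (Equiv.Perm.mem_support.1 hiπ)).1
        rw [← hgx, ← hsame.cycleOf_eq]
        exact Equiv.Perm.mem_support_cycleOf_iff.2 ⟨Equiv.Perm.SameCycle.refl _ _, hiπ⟩
    _ ≤ k := cycLen_le_of_feasible hπ x

end Greedy

/-- Theorem: Greedy.  For every length bound `k ≥ 3` and every
(uniform or non-uniform) length function `λ`, there exists a truthful `(k,λ)`-BE
mechanism with approximation ratio `k`. -/
theorem exists_truthful_mechanism_approx_k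
    (k : ℕ) (hk : 3 ≤ k) (lam : ℕ → ℝ) (hlam : IsLengthFunction k lam) :
    ∃ f : Mechanism,
      IsMechanism k f ∧ Truthful k lam f ∧ ApproxRatio k lam f (k : ℝ) := by
  have hk0 : (0 : ℝ) < k := by exact_mod_cast (by omega : 0 < k)
  refine ⟨greedy k, fun n W _ => greedy_feasible, fun n Wstar W _ hsub i => ?_,
    by exact_mod_cast (by omega : 1 ≤ k), fun n W _ π hπ => ?_⟩
  · exact utility_greedy_le_update hlam (hsub i)
  · rw [ge_iff_le, one_div_mul_eq_div, div_le_iff₀ hk0, mul_comm]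
    exact SW_le_mul_SW_greedy hlam hπ

end

end BarterExchange
end

section
/- For every integer length bound k ≥ 3 and every real ε > 0, there exists a truthful mechanism for the k-BE problem (i.e., the (k,λ)-BE problem with the uniform length function λ ≡ 1) that admits approximation ratio k − 1 + ε. -/
/-!
Barter exchange (BE) framework, following Emek–Shpiro,
"Barter Exchange with Bounded Trading Cycles".
-/

open Finset

namespace BarterExchange

noncomputable section

/-
The mechanism serves agents greedily by priority: it outputs a feasible exchange `π` whose set
`C` of partaking agents is colex-maximal. A served agent stays served when she reports a larger
list, because an exchange that does not use her is feasible for both reports; this gives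
truthfulness. For the ratio, let `σ` be any feasible exchange, with set `S` of partaking agents,
and cut the agents into the classes connected through common `π`-cycles and `σ`-cycles. On a
class `K` where `σ` serves all of `K ∩ C`, running `σ` instead of `π` on `K` would serve a
superset of `C`, so maximality forces `K ∩ S ⊆ C`. Otherwise some agent of `K ∩ C` is not served
by `σ`; as the `π`-cycles and `σ`-cycles of a connected `K` number at most `#K + 1` together
(counting fixed points as cycles), cycles of length at most `k` give
`#(K ∩ S) ≤ (k - 1) * #(K ∩ C)`. Summing over the classes, `#S ≤ (k - 1) * #C`.
-/

open Equiv Equiv.Perm Finset.Colex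

section Linked

variable {α β γ : Type*} [DecidableEq α] [DecidableEq β] [DecidableEq γ]

/-- `K` is connected in the graph joining two points that share an `f`-label or a `g`-label. -/
def IsLinked (f : α → β) (g : α → γ) (K : Finset α) : Prop :=
  ∀ T ⊆ K, T.Nonempty → T ≠ K → ∃ x ∈ T, ∃ y ∈ K \ T, f x = f y ∨ g x = g y

/- A linked set can be grown from a single point, each new point sharing a label with an
earlier one and hence bringing at most one new label. -/
theorem IsLinked.card_image_add_card_image_le {f : α → β} {g : α → γ} {K : Finset α}
    (hK : IsLinked f g K) (hne : K.Nonempty) :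
    #(K.image f) + #(K.image g) ≤ #K + 1 := by
  suffices grow : ∀ d, ∀ T ⊆ K, #(K \ T) = d → T.Nonempty →
      #(T.image f) + #(T.image g) ≤ #T + 1 → #(K.image f) + #(K.image g) ≤ #K + 1 by
    obtain ⟨x, hx⟩ := hne
    exact grow _ {x} (singleton_subset_iff.2 hx) rfl (singleton_nonempty x) (by simp)
  intro d
  induction d with
  | zero =>
    intro T hTK hd _ hT
    rwa [Subset.antisymm hTK (sdiff_eq_empty_iff_subset.1 (card_eq_zero.1 hd))] at hT
  | succ d ih =>
    intro T hTK hd hTne hT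
    have hTK' : T ≠ K := by rintro rfl; simp at hd
    obtain ⟨x, hxT, y, hy, hxy⟩ := hK T hTK hTne hTK'
    refine ih (insert y T) (insert_subset (mem_sdiff.1 hy).1 hTK) ?_ (insert_nonempty y T) ?_
    · rw [sdiff_insert, card_erase_of_mem hy, hd, Nat.add_sub_cancel]
    · rw [image_insert, image_insert, card_insert_of_notMem (mem_sdiff.1 hy).2]
      have hf := card_insert_le (f y) (T.image f)
      have hg := card_insert_le (g y) (T.image g)
      rcases hxy with h | h
      · rw [card_insert_of_mem (s := T.image f) (h ▸ mem_image_of_mem f hxT)]; omega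
      · rw [card_insert_of_mem (s := T.image g) (h ▸ mem_image_of_mem g hxT)]; omega

end Linked

section SameCycleClass

variable {α : Type*} [Fintype α] [DecidableEq α]

def sameCycleClass (π : Perm α) (x : α) : Finset α := {y | π.SameCycle x y}

theorem mem_sameCycleClass {π : Perm α} {x y : α} : y ∈ sameCycleClass π x ↔ π.SameCycle x y := by
  simp [sameCycleClass]

theorem sameCycleClass_apply (π : Perm α) (x : α) :
    sameCycleClass π (π x) = sameCycleClass π x := by
  ext y; simp [mem_sameCycleClass, sameCycle_apply_left]

theorem sameCycleClass_of_apply_eq {π : Perm α} {x : α} (hx : π x = x) :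
    sameCycleClass π x = {x} := by
  ext y
  rw [mem_sameCycleClass, mem_singleton]
  exact ⟨fun h => (h.eq_of_left hx).symm, fun h => h ▸ SameCycle.refl π x⟩

theorem sameCycleClass_of_apply_ne {π : Perm α} {x : α} (hx : π x ≠ x) :
    sameCycleClass π x = (π.cycleOf x).support := by
  ext y; rw [mem_sameCycleClass, mem_support_cycleOf_iff' hx]

/- Fixed points are singleton classes, and the moved points fill classes of size at most `k`. -/
theorem mul_card_sdiff_support_add_card_inter_support_le {π : Perm α} {k : ℕ}
    (hπ : ∀ x, π x ≠ x → #(π.cycleOf x).support ≤ k) (K : Finset α) :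
    k * #(K \ π.support) + #(K ∩ π.support) ≤ k * #(K.image (sameCycleClass π)) := by
  have hdisj : Disjoint ((K \ π.support).image (sameCycleClass π))
      ((K ∩ π.support).image (sameCycleClass π)) := by
    simp only [disjoint_left, mem_image, mem_sdiff, mem_inter, mem_support, not_not]
    rintro _ ⟨x, ⟨_, hx⟩, rfl⟩ ⟨y, ⟨_, hy⟩, hxy⟩
    have : π.SameCycle x y := mem_sameCycleClass.1 (hxy ▸ mem_sameCycleClass.2 (.refl π y))
    exact hy (this.apply_eq_self_iff.1 hx)
  have hfixed : #((K \ π.support).image (sameCycleClass π)) = #(K \ π.support) := by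
    refine card_image_of_injOn fun x hx y hy hxy => ?_
    simp only [mem_coe, mem_sdiff, mem_support, not_not] at hx hy
    rw [sameCycleClass_of_apply_eq hx.2, sameCycleClass_of_apply_eq hy.2] at hxy
    exact singleton_injective hxy
  have hmoved : #(K ∩ π.support) ≤ k * #((K ∩ π.support).image (sameCycleClass π)) := by
    refine card_le_mul_card_image _ k fun b hb => ?_
    obtain ⟨x, hx, rfl⟩ := mem_image.1 hb
    have hxπ : π x ≠ x := mem_support.1 (mem_inter.1 hx).2
    calc #{y ∈ K ∩ π.support | sameCycleClass π y = sameCycleClass π x}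
        ≤ #(sameCycleClass π x) :=
          card_le_card fun y hy => (mem_filter.1 hy).2 ▸ mem_sameCycleClass.2 (.refl π y)
      _ ≤ k := by rw [sameCycleClass_of_apply_ne hxπ]; exact hπ x hxπ
  rw [← sdiff_union_inter K π.support, image_union, card_union_of_disjoint hdisj, mul_add,
    sdiff_union_inter, hfixed]
  omega

/- The two partitions of a linked `K` into cycles have at most `#K + 1` classes together;
a point moved by `π` but fixed by `σ` turns this into the bound. -/
theorem IsLinked.card_inter_support_add_le {π σ : Perm α} {k : ℕ}
    (hπ : ∀ x, π x ≠ x → #(π.cycleOf x).support ≤ k)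
    (hσ : ∀ x, σ x ≠ x → #(σ.cycleOf x).support ≤ k) {K : Finset α}
    (hK : IsLinked (sameCycleClass π) (sameCycleClass σ) K) {z : α} (hzK : z ∈ K)
    (hzπ : z ∈ π.support) (hzσ : z ∉ σ.support) :
    #(K ∩ σ.support) + #(K ∩ π.support) ≤ k * #(K ∩ π.support) := by
  have hclasses := hK.card_image_add_card_image_le ⟨z, hzK⟩
  have hπK := mul_card_sdiff_support_add_card_inter_support_le hπ K
  have hσK := mul_card_sdiff_support_add_card_inter_support_le hσ K
  have hcover : #K ≤ #(K \ π.support) + #(K \ σ.support) + #(K ∩ π.support ∩ σ.support) :=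
    calc #K ≤ #(K \ π.support ∪ K \ σ.support ∪ K ∩ π.support ∩ σ.support) :=
          card_le_card fun x hx => by simp only [mem_union, mem_sdiff, mem_inter]; tauto
      _ ≤ _ := (card_union_le _ _).trans (Nat.add_le_add_right (card_union_le _ _) _)
  have hz : #(K ∩ π.support ∩ σ.support) < #(K ∩ π.support) :=
    card_lt_card ⟨inter_subset_left, fun h => hzσ (mem_inter.1 (h (mem_inter.2 ⟨hzK, hzπ⟩))).2⟩
  nlinarith [Nat.mul_le_mul_left k hclasses, Nat.mul_le_mul_left k hcover,
    Nat.mul_le_mul_left k hz]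

theorem forall_apply_mem_iff_of_forall_sameCycleClass_ne {π : Perm α} {K T : Finset α}
    (hTK : T ⊆ K) (hK : ∀ x, π x ∈ K ↔ x ∈ K)
    (hT : ∀ x ∈ T, ∀ y ∈ K \ T, sameCycleClass π x ≠ sameCycleClass π y) :
    ∀ x, π x ∈ T ↔ x ∈ T := by
  refine fun x => ⟨fun hx => ?_, fun hx => ?_⟩ <;> by_contra hxT
  · exact hT _ hx x (mem_sdiff.2 ⟨(hK x).1 (hTK hx), hxT⟩) (sameCycleClass_apply π x)
  · exact hT x hx _ (mem_sdiff.2 ⟨(hK x).2 (hTK hx), hxT⟩) (sameCycleClass_apply π x).symm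

theorem exists_invariant_ssubset_of_not_isLinked {π σ : Perm α} {K : Finset α}
    (hπK : ∀ x, π x ∈ K ↔ x ∈ K) (hσK : ∀ x, σ x ∈ K ↔ x ∈ K)
    (h : ¬ IsLinked (sameCycleClass π) (sameCycleClass σ) K) :
    ∃ T ⊂ K, T.Nonempty ∧ (∀ x, π x ∈ T ↔ x ∈ T) ∧ (∀ x, σ x ∈ T ↔ x ∈ T) := by
  simp only [IsLinked, not_forall, not_exists, not_or, not_and] at h
  obtain ⟨T, hTK, hTne, hTK', hT⟩ := h
  exact ⟨T, ssubset_of_subset_of_ne hTK hTK', hTne,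
    forall_apply_mem_iff_of_forall_sameCycleClass_ne hTK hπK fun x hx y hy => (hT x hx y hy).1,
    forall_apply_mem_iff_of_forall_sameCycleClass_ne hTK hσK fun x hx y hy => (hT x hx y hy).2⟩

end SameCycleClass

theorem sameCycle_iff_of_eqOn {α : Type*} {f g : Perm α} {s : Finset α} (hf : ∀ x, f x ∈ s ↔ x ∈ s)
    (hg : ∀ x, g x ∈ s ↔ x ∈ s) (hfg : ∀ x ∈ s, f x = g x) {x y : α} (hx : x ∈ s) :
    f.SameCycle x y ↔ g.SameCycle x y := by
  have hres : f.subtypePerm hf = g.subtypePerm hg := by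
    ext ⟨z, hz⟩; simp [hfg z hz]
  simp only [SameCycle, ← subtypePerm_apply_zpow_of_mem hf hx,
    ← subtypePerm_apply_zpow_of_mem hg hx, hres]

theorem card_inter_eq_add_card_sdiff_inter {α : Type*} [DecidableEq α] {T K : Finset α}
    (hTK : T ⊆ K) (A : Finset α) : #(K ∩ A) = #(T ∩ A) + #((K \ T) ∩ A) := by
  rw [← card_union_of_disjoint (disjoint_sdiff.mono inter_subset_left inter_subset_left),
    ← union_inter_distrib_right, union_sdiff_of_subset hTK]

section Exchange

variable {n k : ℕ}

theorem cycLen_eq_of_eqOn {f g : Perm (Fin n)} {s : Finset (Fin n)} (hf : ∀ x, f x ∈ s ↔ x ∈ s)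
    (hg : ∀ x, g x ∈ s ↔ x ∈ s) (hfg : ∀ x ∈ s, f x = g x) {x : Fin n} (hx : x ∈ s) :
    cycLen f x = cycLen g x := by
  unfold cycLen
  congr 1
  ext y
  rw [mem_support_cycleOf_iff, mem_support_cycleOf_iff, sameCycle_iff_of_eqOn hf hg hfg hx,
    mem_support, mem_support, hfg x hx]

theorem feasible_one (k : ℕ) (W : Fin n → Finset (Fin n)) : Feasible k W 1 :=
  fun _ hi => absurd rfl hi

theorem Feasible.mono {W W' : Fin n → Finset (Fin n)} {π : Perm (Fin n)}
    (hW : ∀ j, W j ⊆ W' j) (hπ : Feasible k W π) : Feasible k W' π :=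
  fun i hi => ⟨hW i (hπ i hi).1, (hπ i hi).2⟩

theorem Feasible.of_update {W : Fin n → Finset (Fin n)} {i : Fin n} {s : Finset (Fin n)}
    {π : Perm (Fin n)} (hπ : Feasible k (Function.update W i s) π) (hi : π i = i) :
    Feasible k W π := by
  intro j hj
  have hji : j ≠ i := by rintro rfl; exact hj hi
  simpa [Function.update_of_ne hji] using hπ j hj

/- Run `σ` on the common invariant set `K` and `π` off it. -/
theorem Feasible.piecewise {W : Fin n → Finset (Fin n)} {σ π : Perm (Fin n)}
    (hσ : Feasible k W σ) (hπ : Feasible k W π) {K : Finset (Fin n)}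
    (hσK : ∀ x, σ x ∈ K ↔ x ∈ K) (hπK : ∀ x, π x ∈ K ↔ x ∈ K) :
    ∃ ρ : Perm (Fin n), Feasible k W ρ ∧ ρ.support = K ∩ σ.support ∪ (π.support \ K) := by
  let ρ := (σ.subtypePerm hσK).subtypeCongr (π.subtypePerm fun x => (hπK x).not)
  have hρK : ∀ x ∈ K, ρ x = σ x := fun x hx => subtypeCongr.left_apply _ _ hx
  have hρKc : ∀ x ∈ Kᶜ, ρ x = π x := fun x hx => subtypeCongr.right_apply _ _ (mem_compl.1 hx)
  have hπKc : ∀ x, π x ∈ Kᶜ ↔ x ∈ Kᶜ := fun x => by simp [hπK]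
  have hρinv : ∀ x, ρ x ∈ K ↔ x ∈ K := fun x => by
    by_cases hx : x ∈ K
    · simp [hρK x hx, hσK, hx]
    · simp [hρKc x (mem_compl.2 hx), hπK, hx]
  have hρinvc : ∀ x, ρ x ∈ Kᶜ ↔ x ∈ Kᶜ := fun x => by simp [hρinv]
  refine ⟨ρ, fun x hx => ?_, ?_⟩
  · by_cases hxK : x ∈ K
    · rw [hρK x hxK] at hx ⊢
      rw [cycLen_eq_of_eqOn hρinv hσK hρK hxK]
      exact hσ x hx
    · have hxKc := mem_compl.2 hxK
      rw [hρKc x hxKc] at hx ⊢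
      rw [cycLen_eq_of_eqOn hρinvc hπKc hρKc hxKc]
      exact hπ x hx
  · ext x
    by_cases hxK : x ∈ K
    · simp [mem_support, hρK x hxK, hxK]
    · simp [mem_support, hρKc x (mem_compl.2 hxK), hxK]

theorem exists_feasible_toColex_support_max (k : ℕ) (W : Fin n → Finset (Fin n)) :
    ∃ π : Perm (Fin n), Feasible k W π ∧
      ∀ σ, Feasible k W σ → toColex σ.support ≤ toColex π.support := by
  have : Nonempty {σ : Perm (Fin n) // Feasible k W σ} := ⟨⟨1, feasible_one k W⟩⟩
  obtain ⟨⟨π, hπ⟩, hmax⟩ :=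
    Finite.exists_max fun σ : {σ : Perm (Fin n) // Feasible k W σ} => toColex σ.1.support
  exact ⟨π, hπ, fun σ hσ => hmax ⟨σ, hσ⟩⟩

/- Colex-maximality of the support is the greedy priority rule: agent `n - 1` is served if
possible, then agent `n - 2`, and so on. -/
def priorityExchange (k : ℕ) (W : Fin n → Finset (Fin n)) : Perm (Fin n) :=
  (exists_feasible_toColex_support_max k W).choose

theorem priorityExchange_feasible (k : ℕ) (W : Fin n → Finset (Fin n)) :
    Feasible k W (priorityExchange k W) :=
  (exists_feasible_toColex_support_max k W).choose_spec.1

theorem toColex_support_le_priorityExchange {W : Fin n → Finset (Fin n)} {σ : Perm (Fin n)}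
    (hσ : Feasible k W σ) : toColex σ.support ≤ toColex (priorityExchange k W).support :=
  (exists_feasible_toColex_support_max k W).choose_spec.2 σ hσ

theorem support_eq_of_support_priorityExchange_subset {W : Fin n → Finset (Fin n)}
    {σ : Perm (Fin n)} (hσ : Feasible k W σ) (h : (priorityExchange k W).support ⊆ σ.support) :
    σ.support = (priorityExchange k W).support :=
  toColex_inj.1 (le_antisymm (toColex_support_le_priorityExchange hσ)
    (toColex_le_toColex_of_subset h))

/- If `i` dropped out after enlarging her list, the new exchange would not use her, so it would
be feasible for the old lists as well; both supports would then be colex-maximal for both. -/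
theorem mem_support_priorityExchange_update {W : Fin n → Finset (Fin n)} {i : Fin n}
    {s : Finset (Fin n)} (hs : W i ⊆ s) (hi : i ∈ (priorityExchange k W).support) :
    i ∈ (priorityExchange k (Function.update W i s)).support := by
  by_contra hi'
  have hW : ∀ j, W j ⊆ Function.update W i s j := by
    intro j
    rcases eq_or_ne j i with rfl | hj
    · simpa using hs
    · simp [Function.update_of_ne hj]
  have h₁ := toColex_support_le_priorityExchange
    ((priorityExchange_feasible k _).of_update (notMem_support.1 hi'))
  have h₂ := toColex_support_le_priorityExchange ((priorityExchange_feasible k W).mono hW)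
  exact hi' (toColex_inj.1 (le_antisymm h₂ h₁) ▸ hi)

/- Swapping the exchange on `K` for `σ` keeps every agent of `K` covered, so by maximality it
cannot cover anybody new. -/
theorem inter_support_subset_support_priorityExchange {W : Fin n → Finset (Fin n)}
    {σ : Perm (Fin n)} (hσ : Feasible k W σ) {K : Finset (Fin n)}
    (hπK : ∀ x, priorityExchange k W x ∈ K ↔ x ∈ K) (hσK : ∀ x, σ x ∈ K ↔ x ∈ K)
    (hcov : K ∩ (priorityExchange k W).support ⊆ σ.support) :
    K ∩ σ.support ⊆ (priorityExchange k W).support := by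
  obtain ⟨ρ, hρ, hρsupp⟩ := hσ.piecewise (priorityExchange_feasible k W) hσK hπK
  have hsub : (priorityExchange k W).support ⊆ ρ.support := by
    intro x hx
    rw [hρsupp]
    by_cases hxK : x ∈ K
    · exact mem_union_left _ (mem_inter.2 ⟨hxK, hcov (mem_inter.2 ⟨hxK, hx⟩)⟩)
    · exact mem_union_right _ (mem_sdiff.2 ⟨hx, hxK⟩)
  rw [← support_eq_of_support_priorityExchange_subset hρ hsub, hρsupp]
  exact subset_union_left

/- Split `K` along a proper invariant subset as long as there is one; on a linked `K`, either all
of `K`'s partaking agents stay covered under `σ`, or the counting bound applies. -/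
theorem card_inter_support_add_le (hk : 2 ≤ k) {W : Fin n → Finset (Fin n)} {σ : Perm (Fin n)}
    (hσ : Feasible k W σ) (K : Finset (Fin n))
    (hπK : ∀ x, priorityExchange k W x ∈ K ↔ x ∈ K) (hσK : ∀ x, σ x ∈ K ↔ x ∈ K) :
    #(K ∩ σ.support) + #(K ∩ (priorityExchange k W).support) ≤
      k * #(K ∩ (priorityExchange k W).support) := by
  set π := priorityExchange k W
  induction K using Finset.strongInduction with
  | H K ih =>
  by_cases hlink : IsLinked (sameCycleClass π) (sameCycleClass σ) K
  · by_cases hcov : K ∩ π.support ⊆ σ.support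
    · have := card_le_card (subset_inter inter_subset_left
        (inter_support_subset_support_priorityExchange hσ hπK hσK hcov))
      nlinarith
    · obtain ⟨z, hz, hzσ⟩ := not_subset.1 hcov
      exact hlink.card_inter_support_add_le (fun x hx => ((priorityExchange_feasible k W) x hx).2)
        (fun x hx => (hσ x hx).2) (mem_inter.1 hz).1 (mem_inter.1 hz).2 hzσ
  · obtain ⟨T, hTK, hTne, hπT, hσT⟩ := exists_invariant_ssubset_of_not_isLinked hπK hσK hlink
    have hπD : ∀ x, π x ∈ K \ T ↔ x ∈ K \ T := fun x => by simp [hπK, hπT]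
    have hσD : ∀ x, σ x ∈ K \ T ↔ x ∈ K \ T := fun x => by simp [hσK, hσT]
    have h₁ := ih T hTK hσT hπT
    have h₂ := ih (K \ T) (sdiff_ssubset hTK.subset hTne) hσD hπD
    rw [card_inter_eq_add_card_sdiff_inter hTK.subset,
      card_inter_eq_add_card_sdiff_inter hTK.subset]
    linarith

theorem card_support_add_card_support_priorityExchange_le (hk : 2 ≤ k)
    {W : Fin n → Finset (Fin n)} {σ : Perm (Fin n)} (hσ : Feasible k W σ) :
    #σ.support + #(priorityExchange k W).support ≤ k * #(priorityExchange k W).support := by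
  simpa using card_inter_support_add_le hk hσ univ (by simp) (by simp)

theorem SW_one (π : Perm (Fin n)) : SW (fun _ => 1) π = #π.support := by
  simp only [SW, utility, sum_boole]
  rfl

end Exchange

def priorityMechanism (k : ℕ) : Mechanism := fun _ W => priorityExchange k W

theorem priorityMechanism_truthful (k : ℕ) : Truthful k (fun _ => 1) (priorityMechanism k) := by
  intro n Wstar W _ hW i
  unfold utility
  split_ifs with hi hi' <;> norm_num
  exact hi' (mem_support.1 (mem_support_priorityExchange_update (hW i) (mem_support.2 hi)))

theorem priorityMechanism_approxRatio {k : ℕ} (hk : 2 ≤ k) {r : ℝ} (hr : (k : ℝ) - 1 ≤ r) :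
    ApproxRatio k (fun _ => 1) (priorityMechanism k) r := by
  have hk' : (2 : ℝ) ≤ k := by exact_mod_cast hk
  refine ⟨by linarith, fun n W _ σ hσ => ?_⟩
  have hcount : (#σ.support : ℝ) + #(priorityExchange k W).support ≤
      k * #(priorityExchange k W).support := by
    exact_mod_cast card_support_add_card_support_priorityExchange_le hk hσ
  have hC : (0 : ℝ) ≤ #(priorityExchange k W).support := Nat.cast_nonneg _
  rw [priorityMechanism, SW_one, SW_one, ge_iff_le, one_div_mul_eq_div, div_le_iff₀ (by linarith)]
  nlinarith

/-- Theorem 2 of the paper.  For every length bound `k ≥ 3` and every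
`ε > 0`, the `k`-BE problem (i.e., `(k,λ)`-BE with the uniform length function `λ ≡ 1`)
admits a truthful mechanism with approximation ratio `k − 1 + ε`. -/
theorem exists_truthful_mechanism_uniform_approx
    (k : ℕ) (hk : 3 ≤ k) (ε : ℝ) (hε : 0 < ε) :
    ∃ f : Mechanism,
      IsMechanism k f ∧ Truthful k (fun _ => (1 : ℝ)) f ∧
        ApproxRatio k (fun _ => (1 : ℝ)) f ((k : ℝ) - 1 + ε) :=
  ⟨priorityMechanism k, fun _ W _ => priorityExchange_feasible k W, priorityMechanism_truthful k,
    priorityMechanism_approxRatio (by omega) (by linarith)⟩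

end

end BarterExchange
end

section
/- For every integer length bound k ≥ 3 and every non-uniform length function λ, there exists a (not necessarily computationally efficient) truthful (k,λ)-BE mechanism that admits approximation ratio ρ(λ) (witnessed by the iterative-optimal mechanism IO). -/
/-!
Barter exchange (BE) framework, following Emek–Shpiro,
"Barter Exchange with Bounded Trading Cycles".
-/

open Finset

namespace BarterExchange

noncomputable section

/-- A length function is non-uniform if it strictly decreases somewhere on `{2,…,k}`. -/
def NonUniform (k : ℕ) (lam : ℕ → ℝ) : Prop :=
  ∃ ℓ ℓ' : ℕ, 2 ≤ ℓ ∧ ℓ < ℓ' ∧ ℓ' ≤ k ∧ lam ℓ' < lam ℓ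

/-- The critical ratio `ρ(λ)`: the maximum, over all pairs `2 ≤ ℓ < ℓ′ ≤ k` with
`λ(ℓ) > λ(ℓ′)`, of `max{ ℓ′·λ(ℓ′)/λ(ℓ), ((ℓ−1)/ℓ)·(ℓ′·λ(ℓ′)/λ(ℓ)) + 1 }`. -/
def rho (k : ℕ) (lam : ℕ → ℝ) : ℝ :=
  sSup {x : ℝ |
    ∃ ℓ ℓ' : ℕ, 2 ≤ ℓ ∧ ℓ < ℓ' ∧ ℓ' ≤ k ∧ lam ℓ' < lam ℓ ∧
      x = max ((ℓ' : ℝ) * lam ℓ' / lam ℓ)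
              (((ℓ : ℝ) - 1) / (ℓ : ℝ) * ((ℓ' : ℝ) * lam ℓ' / lam ℓ) + 1)}

/-!
IO handles the distinct values `v₁ > v₂ > ⋯` of `λ` in turn: at value `v` it commits, among the
agents still unmatched, an exchange of maximum size all of whose cycles have lengths `ℓ` with
`λ(ℓ) = v`, ties broken by a fixed order so that the choice is unchanged when the candidate set
shrinks but still contains it.

Truthfulness: the runs on the reported and on the truthful list of agent `i` coincide until the
first stage whose choice differs; that choice must use an edge of `i` missing from the report, so
`i` is matched there at the highest value still available.

Approximation: charge each cycle of an optimal exchange to the first stage that hits it. A stage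
matching `m` agents at value `v` hits at most `m` cycles; by maximality the hit cycles of its own
class cover at most `m` agents, and each other hit cycle has a length `L` with `λ(L) < λ(M)`, `M`
the longest length of the class, so its welfare is bounded through the pair `(M, L)` in `ρ(λ)`.
Balancing the two kinds gives hit welfare at most `ρ(λ) · v · m`.
-/

open Equiv Equiv.Perm

theorem card_le_card_of_forall_not_disjoint {α ι : Type*} [DecidableEq α] {s : Finset ι}
    {f : ι → Finset α} {A : Finset α} (hs : (s : Set ι).PairwiseDisjoint f)
    (hA : ∀ i ∈ s, ¬Disjoint (f i) A) :
    #s ≤ #A :=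
  calc #s ≤ #(s.biUnion fun i => f i ∩ A) :=
        card_le_card_biUnion (hs.mono fun _ => inter_subset_left)
          fun i hi => not_disjoint_iff_nonempty_inter.1 (hA i hi)
    _ ≤ #A := card_le_card (biUnion_subset.2 fun _ _ => inter_subset_right)

section Permutations

variable {α : Type*} [DecidableEq α] [Fintype α]

theorem pairwiseDisjoint_support_cycleFactorsFinset (π : Perm α) :
    (π.cycleFactorsFinset : Set (Perm α)).PairwiseDisjoint support :=
  fun _ hc _ hd hne =>
    disjoint_iff_disjoint_support.1 (π.cycleFactorsFinset_pairwise_disjoint hc hd hne)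

theorem support_eq_biUnion_cycleFactorsFinset (π : Perm α) :
    π.support = π.cycleFactorsFinset.biUnion support := by
  ext x
  rw [mem_biUnion, mem_support_iff_mem_support_of_mem_cycleFactorsFinset]

theorem card_support_eq_sum_cycleFactorsFinset (π : Perm α) :
    #π.support = ∑ c ∈ π.cycleFactorsFinset, #c.support := by
  rw [support_eq_biUnion_cycleFactorsFinset,
    card_biUnion (pairwiseDisjoint_support_cycleFactorsFinset π)]

theorem exists_cycleFactorsFinset_eq {π : Perm α} {s : Finset (Perm α)}
    (hs : s ⊆ π.cycleFactorsFinset) : ∃ τ : Perm α, τ.cycleFactorsFinset = s :=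
  ⟨_, cycleFactorsFinset_eq_finset.2 ⟨fun _ hc => (mem_cycleFactorsFinset_iff.1 (hs hc)).1,
    π.cycleFactorsFinset_pairwise_disjoint.mono (coe_subset.2 hs), rfl⟩⟩

end Permutations

variable {n : ℕ}

theorem cycLen_eq_of_mem_cycleFactorsFinset {π c : Perm (Fin n)} (hc : c ∈ π.cycleFactorsFinset)
    {i : Fin n} (hi : i ∈ c.support) : cycLen π i = #c.support := by
  rw [cycLen, ← cycle_is_cycleOf hi hc]

theorem feasible_iff_forall_cycleFactorsFinset {k : ℕ} {W : Fin n → Finset (Fin n)}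
    {π : Perm (Fin n)} : Feasible k W π ↔
      ∀ c ∈ π.cycleFactorsFinset, #c.support ≤ k ∧ ∀ i ∈ c.support, c i ∈ W i := by
  constructor
  · intro h c hc
    obtain ⟨i, hi⟩ := (mem_cycleFactorsFinset_iff.1 hc).1.nonempty_support
    refine ⟨?_, fun j hj => ?_⟩
    · rw [← cycLen_eq_of_mem_cycleFactorsFinset hc hi]
      exact (h i (mem_support.1 (mem_cycleFactorsFinset_support_le hc hi))).2
    · rw [(mem_cycleFactorsFinset_iff.1 hc).2 j hj]
      exact (h j (mem_support.1 (mem_cycleFactorsFinset_support_le hc hj))).1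
  · intro h i hi
    have hc := cycleOf_mem_cycleFactorsFinset_iff.2 (mem_support.2 hi)
    have hic : i ∈ (π.cycleOf i).support :=
      mem_support_cycleOf_iff.2 ⟨.refl _ _, mem_support.2 hi⟩
    obtain ⟨hk, hW⟩ := h _ hc
    exact ⟨cycleOf_apply_self π i ▸ hW i hic, hk⟩

theorem Feasible.mul_of_disjoint {k : ℕ} {W : Fin n → Finset (Fin n)} {σ τ : Perm (Fin n)}
    (hσ : Feasible k W σ) (hτ : Feasible k W τ) (h : σ.Disjoint τ) : Feasible k W (σ * τ) := by
  rw [feasible_iff_forall_cycleFactorsFinset, h.cycleFactorsFinset_mul_eq_union] at *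
  intro c hc
  rcases mem_union.1 hc with hc | hc
  exacts [hσ c hc, hτ c hc]

theorem utility_mul_of_apply_eq_self (lam : ℕ → ℝ) {σ τ : Perm (Fin n)} (h : Commute σ τ)
    {i : Fin n} (hi : τ i = i) : utility lam (σ * τ) i = utility lam σ i := by
  have hcyc : (σ * τ).cycleOf i = σ.cycleOf i := cycleOf_mul_of_apply_right_eq_self h i hi
  have hfix : (σ * τ) i = i ↔ σ i = i := by
    rw [← cycleOf_eq_one_iff, ← cycleOf_eq_one_iff, hcyc]
  simp only [utility, cycLen, hcyc, ne_eq, hfix]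

def cycleWelfare (lam : ℕ → ℝ) (c : Perm (Fin n)) : ℝ :=
  #c.support * lam #c.support

theorem SW_eq_sum_cycleWelfare (lam : ℕ → ℝ) (π : Perm (Fin n)) :
    SW lam π = ∑ c ∈ π.cycleFactorsFinset, cycleWelfare lam c := by
  have hsupp : SW lam π = ∑ i ∈ π.support, lam (cycLen π i) := by
    rw [SW, ← sum_subset (subset_univ π.support) fun i _ hi => by
      simp [utility, notMem_support.1 hi]]
    exact sum_congr rfl fun i hi => by simp [utility, mem_support.1 hi]
  rw [hsupp, support_eq_biUnion_cycleFactorsFinset,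
    sum_biUnion (pairwiseDisjoint_support_cycleFactorsFinset π)]
  refine sum_congr rfl fun c hc => ?_
  rw [sum_congr rfl fun i hi => by rw [cycLen_eq_of_mem_cycleFactorsFinset hc hi], sum_const,
    nsmul_eq_mul, cycleWelfare]

theorem SW_mul_of_disjoint (lam : ℕ → ℝ) {σ τ : Perm (Fin n)} (h : σ.Disjoint τ) :
    SW lam (σ * τ) = SW lam σ + SW lam τ := by
  simp only [SW_eq_sum_cycleWelfare, h.cycleFactorsFinset_mul_eq_union,
    sum_union h.disjoint_cycleFactorsFinset]

abbrev exchangeOrder (n : ℕ) : LinearOrder (Perm (Fin n)) :=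
  LinearOrder.lift' (fun π => toLex (#π.support, Fintype.equivFin (Perm (Fin n)) π))
    fun _ _ h => (Fintype.equivFin _).injective (congrArg Prod.snd (toLex.injective h))

attribute [local instance] exchangeOrder

theorem card_support_le_of_le {π τ : Perm (Fin n)} (h : τ ≤ π) : #τ.support ≤ #π.support := by
  rcases Prod.Lex.le_iff.1 h with h | h
  exacts [h.le, h.1.le]

def lengthClass (k : ℕ) (lam : ℕ → ℝ) (v : ℝ) : Finset ℕ :=
  {ℓ ∈ Icc 2 k | lam ℓ = v}

open scoped Classical in
def stageSols (W : Fin n → Finset (Fin n)) (L : Finset ℕ) (A : Finset (Fin n)) :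
    Finset (Perm (Fin n)) :=
  {π | ∀ c ∈ π.cycleFactorsFinset,
    c.support ⊆ A ∧ #c.support ∈ L ∧ ∀ i ∈ c.support, c i ∈ W i}

section Stage

variable {W : Fin n → Finset (Fin n)} {L : Finset ℕ} {A : Finset (Fin n)}

theorem mem_stageSols {π : Perm (Fin n)} : π ∈ stageSols W L A ↔
    ∀ c ∈ π.cycleFactorsFinset,
      c.support ⊆ A ∧ #c.support ∈ L ∧ ∀ i ∈ c.support, c i ∈ W i := by
  simp [stageSols]

theorem one_mem_stageSols : (1 : Perm (Fin n)) ∈ stageSols W L A := by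
  simp [mem_stageSols]

theorem mul_mem_stageSols {σ τ : Perm (Fin n)} (hσ : σ ∈ stageSols W L A)
    (hτ : τ ∈ stageSols W L A) (h : σ.Disjoint τ) : σ * τ ∈ stageSols W L A := by
  rw [mem_stageSols, h.cycleFactorsFinset_mul_eq_union] at *
  intro c hc
  rcases mem_union.1 hc with hc | hc
  exacts [hσ c hc, hτ c hc]

theorem stageSols_mono {W' : Fin n → Finset (Fin n)} (hW : ∀ j, W j ⊆ W' j) :
    stageSols W L A ⊆ stageSols W' L A := by
  simp only [subset_iff, mem_stageSols]
  exact fun π hπ c hc => ⟨(hπ c hc).1, (hπ c hc).2.1, fun i hi => hW i ((hπ c hc).2.2 i hi)⟩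

theorem support_subset_of_mem_stageSols {π : Perm (Fin n)} (hπ : π ∈ stageSols W L A) :
    π.support ⊆ A := by
  rw [support_eq_biUnion_cycleFactorsFinset]
  exact biUnion_subset.2 fun c hc => ((mem_stageSols.1 hπ) c hc).1

end Stage

variable (k : ℕ) (lam : ℕ → ℝ)

def stage (W : Fin n → Finset (Fin n)) (v : ℝ) (σ : Perm (Fin n)) : Perm (Fin n) :=
  (stageSols W (lengthClass k lam v) σ.supportᶜ).max' ⟨1, one_mem_stageSols⟩

def run (W : Fin n → Finset (Fin n)) : List ℝ → Perm (Fin n) → Perm (Fin n)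
  | [], σ => σ
  | v :: vs, σ => run W vs (σ * stage k lam W v σ)

def values : List ℝ :=
  ((Icc 2 k).image lam).sort (· ≥ ·)

def iterativeOptimal : Mechanism :=
  fun _ W => run k lam W (values k lam) 1

variable {k lam} {W : Fin n → Finset (Fin n)} {v : ℝ} {σ : Perm (Fin n)}
  {A : Finset (Fin n)}

theorem exists_max_lengthClass (hv : v ∈ (Icc 2 k).image lam) :
    ∃ M ∈ lengthClass k lam v, ∀ ℓ ∈ lengthClass k lam v, ℓ ≤ M := by
  obtain ⟨ℓ, hℓ, rfl⟩ := mem_image.1 hv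
  have hne : (lengthClass k lam (lam ℓ)).Nonempty := ⟨ℓ, mem_filter.2 ⟨hℓ, rfl⟩⟩
  exact ⟨_, max'_mem _ hne, fun _ h => le_max' _ _ h⟩

theorem stage_mem : stage k lam W v σ ∈ stageSols W (lengthClass k lam v) σ.supportᶜ :=
  max'_mem _ _

theorem card_support_le_stage {τ : Perm (Fin n)}
    (hτ : τ ∈ stageSols W (lengthClass k lam v) σ.supportᶜ) :
    #τ.support ≤ #(stage k lam W v σ).support :=
  card_support_le_of_le (le_max' _ _ hτ)

theorem stage_eq_of_mem {W' : Fin n → Finset (Fin n)} (hW : ∀ j, W j ⊆ W' j)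
    (h : stage k lam W' v σ ∈ stageSols W (lengthClass k lam v) σ.supportᶜ) :
    stage k lam W v σ = stage k lam W' v σ :=
  le_antisymm (max'_subset _ (stageSols_mono hW)) (le_max' _ _ h)

theorem disjoint_stage : σ.Disjoint (stage k lam W v σ) :=
  disjoint_iff_disjoint_support.2 <|
    disjoint_left.2 fun _ hi hi' => mem_compl.1 (support_subset_of_mem_stageSols stage_mem hi') hi

theorem feasible_of_mem_stageSols {π : Perm (Fin n)}
    (hπ : π ∈ stageSols W (lengthClass k lam v) A) : Feasible k W π := by
  rw [feasible_iff_forall_cycleFactorsFinset]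
  intro c hc
  obtain ⟨-, hL, hW⟩ := mem_stageSols.1 hπ c hc
  simp only [lengthClass, mem_filter, mem_Icc] at hL
  exact ⟨hL.1.2, hW⟩

theorem utility_of_mem_stageSols {π : Perm (Fin n)}
    (hπ : π ∈ stageSols W (lengthClass k lam v) A) {i : Fin n} (hi : i ∈ π.support) :
    utility lam π i = v := by
  have hc := cycleOf_mem_cycleFactorsFinset_iff.2 hi
  have hL := (mem_stageSols.1 hπ _ hc).2.1
  simp only [lengthClass, mem_filter] at hL
  rw [utility, if_pos (mem_support.1 hi), cycLen, hL.2]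

theorem SW_of_mem_stageSols {π : Perm (Fin n)}
    (hπ : π ∈ stageSols W (lengthClass k lam v) A) : SW lam π = v * #π.support := by
  rw [SW_eq_sum_cycleWelfare, card_support_eq_sum_cycleFactorsFinset, Nat.cast_sum, mul_sum]
  refine sum_congr rfl fun c hc => ?_
  have hL := (mem_stageSols.1 hπ c hc).2.1
  simp only [lengthClass, mem_filter] at hL
  rw [cycleWelfare, hL.2, mul_comm]

theorem feasible_run (vs : List ℝ) (hσ : Feasible k W σ) : Feasible k W (run k lam W vs σ) := by
  induction vs generalizing σ with
  | nil => exact hσ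
  | cons v vs ih =>
    exact ih (hσ.mul_of_disjoint (feasible_of_mem_stageSols stage_mem) disjoint_stage)

theorem utility_run_of_mem_support (vs : List ℝ) {i : Fin n} (hi : i ∈ σ.support) :
    utility lam (run k lam W vs σ) i = utility lam σ i := by
  induction vs generalizing σ with
  | nil => rfl
  | cons v vs ih =>
    have hd : σ.Disjoint (stage k lam W v σ) := disjoint_stage
    rw [run, ih (hd.support_mul ▸ mem_union_left _ hi),
      utility_mul_of_apply_eq_self lam hd.commute
        (notMem_support.1 (disjoint_left.1 (disjoint_iff_disjoint_support.1 hd) hi))]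

theorem utility_run_of_mem_support_stage (vs : List ℝ) {i : Fin n}
    (hi : i ∈ (stage k lam W v σ).support) :
    utility lam (run k lam W vs (σ * stage k lam W v σ)) i = v := by
  have hd : σ.Disjoint (stage k lam W v σ) := disjoint_stage
  rw [utility_run_of_mem_support vs (hd.support_mul ▸ mem_union_right _ hi), hd.commute.eq,
    utility_mul_of_apply_eq_self lam hd.symm.commute
      (notMem_support.1 (disjoint_right.1 (disjoint_iff_disjoint_support.1 hd) hi)),
    utility_of_mem_stageSols stage_mem hi]

theorem utility_run_le (vs : List ℝ) (hvs : ∀ v' ∈ vs, v' ≤ v) (hv : 0 ≤ v) {i : Fin n}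
    (hi : i ∉ σ.support) : utility lam (run k lam W vs σ) i ≤ v := by
  induction vs generalizing σ with
  | nil => simp [run, utility, notMem_support.1 hi, hv]
  | cons v' vs ih =>
    rw [run]
    by_cases hi' : i ∈ (stage k lam W v' σ).support
    · rw [utility_run_of_mem_support_stage vs hi']
      exact hvs v' List.mem_cons_self
    · refine ih (fun v'' hv'' => hvs v'' (List.mem_cons_of_mem _ hv'')) ?_
      rw [disjoint_stage.support_mul]
      simp [hi, hi']

theorem mem_support_of_notMem_stageSols {W' : Fin n → Finset (Fin n)} {L : Finset ℕ}
    {i : Fin n} (hWi : ∀ j ≠ i, W' j = W j) {π : Perm (Fin n)} (hπ : π ∈ stageSols W' L A)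
    (h : π ∉ stageSols W L A) : i ∈ π.support := by
  by_contra hi
  refine h (mem_stageSols.2 fun c hc => ?_)
  obtain ⟨hA, hL, hW⟩ := mem_stageSols.1 hπ c hc
  refine ⟨hA, hL, fun j hj => ?_⟩
  rw [← hWi j fun hji => hi (hji ▸ mem_cycleFactorsFinset_support_le hc hj)]
  exact hW j hj

theorem utility_run_le_of_subset {W' : Fin n → Finset (Fin n)} {i : Fin n}
    (hW : ∀ j, W j ⊆ W' j) (hWi : ∀ j ≠ i, W' j = W j) (vs : List ℝ)
    (hsort : vs.Pairwise (· ≥ ·)) (hpos : ∀ v ∈ vs, 0 < v) (hi : i ∉ σ.support) :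
    utility lam (run k lam W vs σ) i ≤ utility lam (run k lam W' vs σ) i := by
  induction vs generalizing σ with
  | nil => rfl
  | cons v vs ih =>
    by_cases h : stage k lam W' v σ ∈ stageSols W (lengthClass k lam v) σ.supportᶜ
    · rw [run, run, ← stage_eq_of_mem hW h]
      by_cases hi' : i ∈ (σ * stage k lam W v σ).support
      · rw [utility_run_of_mem_support vs hi', utility_run_of_mem_support vs hi']
      · exact ih hsort.of_cons (fun v' hv' => hpos v' (List.mem_cons_of_mem _ hv')) hi'
    · have hi' := mem_support_of_notMem_stageSols hWi stage_mem h
      calc utility lam (run k lam W (v :: vs) σ) i ≤ v :=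
            utility_run_le (v :: vs)
              (List.forall_mem_cons.2 ⟨le_rfl, fun _ h => List.rel_of_pairwise_cons hsort h⟩)
              (hpos v List.mem_cons_self).le hi
        _ = utility lam (run k lam W' (v :: vs) σ) i :=
            (utility_run_of_mem_support_stage vs hi').symm

theorem mem_values : v ∈ values k lam ↔ v ∈ (Icc 2 k).image lam :=
  mem_sort _

theorem pairwise_gt_values : (values k lam).Pairwise (· > ·) :=
  ((pairwise_sort _ _).and (sort_nodup _ _)).imp fun h => lt_of_le_of_ne h.1 h.2.symm

theorem isMechanism_iterativeOptimal : IsMechanism k (iterativeOptimal k lam) :=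
  fun _ _ _ => feasible_run _ fun _ h => absurd rfl h

theorem truthful_iterativeOptimal (hlam : IsLengthFunction k lam) :
    Truthful k lam (iterativeOptimal k lam) := by
  intro n Wstar W _ hW i
  refine utility_run_le_of_subset (fun j => ?_) (fun j hj => Function.update_of_ne hj _ _)
    (values k lam) (pairwise_gt_values.imp le_of_lt) (fun v hv => ?_) (by simp)
  · rcases eq_or_ne j i with rfl | hj
    · simpa using hW j
    · simp [hj]
  · obtain ⟨ℓ, hℓ, rfl⟩ := mem_image.1 (mem_values.1 hv)
    exact (hlam.1 ℓ (mem_Icc.1 hℓ).1 (mem_Icc.1 hℓ).2).1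

theorem le_rho {ℓ ℓ' : ℕ} (hℓ : 2 ≤ ℓ) (hlt : ℓ < ℓ') (hℓ' : ℓ' ≤ k) (hdec : lam ℓ' < lam ℓ) :
    max ((ℓ' : ℝ) * lam ℓ' / lam ℓ) (((ℓ : ℝ) - 1) / ℓ * ((ℓ' : ℝ) * lam ℓ' / lam ℓ) + 1) ≤
      rho k lam := by
  refine le_csSup (Set.Finite.bddAbove <| Set.Finite.subset
    (((Set.finite_Icc 2 k).prod (Set.finite_Icc 2 k)).image fun p : ℕ × ℕ =>
      max ((p.2 : ℝ) * lam p.2 / lam p.1)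
        (((p.1 : ℝ) - 1) / p.1 * ((p.2 : ℝ) * lam p.2 / lam p.1) + 1)) ?_)
    ⟨ℓ, ℓ', hℓ, hlt, hℓ', hdec, rfl⟩
  rintro _ ⟨a, b, ha, hab, hb, -, rfl⟩
  exact ⟨(a, b), ⟨⟨ha, by omega⟩, by omega, hb⟩, rfl⟩

theorem one_le_rho (hlam : IsLengthFunction k lam) (hnu : NonUniform k lam) : 1 ≤ rho k lam := by
  obtain ⟨ℓ, ℓ', hℓ, hlt, hℓ', hdec⟩ := hnu
  have hℓR : (2 : ℝ) ≤ ℓ := by exact_mod_cast hℓ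
  have hpos := (hlam.1 ℓ hℓ (by omega)).1
  have hpos' := (hlam.1 ℓ' (by omega) hℓ').1
  have : 0 ≤ ((ℓ : ℝ) - 1) / ℓ * ((ℓ' : ℝ) * lam ℓ' / lam ℓ) :=
    mul_nonneg (div_nonneg (by linarith) (by linarith)) (by positivity)
  linarith [le_max_right ((ℓ' : ℝ) * lam ℓ' / lam ℓ)
    (((ℓ : ℝ) - 1) / ℓ * ((ℓ' : ℝ) * lam ℓ' / lam ℓ) + 1), le_rho hℓ hlt hℓ' hdec]

theorem rho_bounds_of_lam_lt (hlam : IsLengthFunction k lam) {M L : ℕ} (hM : 2 ≤ M) (hMk : M ≤ k)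
    (hL : 2 ≤ L) (hLk : L ≤ k) (hlt : lam L < lam M) :
    (L : ℝ) * lam L / lam M ≤ rho k lam ∧
      ((M : ℝ) - 1) / M * ((L : ℝ) * lam L / lam M) + 1 ≤ rho k lam := by
  have hML : M < L := lt_of_not_ge fun h => (hlam.2 _ _ hL h hMk).not_gt hlt
  have h := le_rho hM hML hLk hlt
  exact ⟨(le_max_left _ _).trans h, (le_max_right _ _).trans h⟩

/-- The charging inequality of one stage matching `m` agents, normalized by its value: the hit
cycles are `t` cycles of its own class, of lengths at most `M` and `u` agents in total, and the
cycles `b` of normalized welfare `r c`; all of them are hit in distinct agents. -/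
theorem add_sum_le_mul {ι : Type*} {b : Finset ι} {r : ι → ℝ} {u t m M ρ : ℝ} (hM : 1 < M)
    (hρ : 1 ≤ ρ) (hu₀ : 0 ≤ u) (hu : u ≤ m) (hut : u ≤ M * t) (htb : t + #b ≤ m)
    (hr : ∀ c ∈ b, r c ≤ ρ ∧ (M - 1) / M * r c + 1 ≤ ρ) :
    u + ∑ c ∈ b, r c ≤ ρ * m := by
  set R := min ρ (M * (ρ - 1) / (M - 1))
  have hM₁ : 0 < M - 1 := by linarith
  have hR₀ : 0 ≤ R := le_min (by linarith) (div_nonneg (by nlinarith) hM₁.le)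
  have hRρ : R ≤ ρ := min_le_left _ _
  have hRM : (M - 1) * R ≤ M * (ρ - 1) := by
    rw [mul_comm, ← le_div_iff₀ hM₁]; exact min_le_right _ _
  have hsum : ∑ c ∈ b, r c ≤ #b * R := by
    rw [← nsmul_eq_mul]
    refine sum_le_card_nsmul _ _ _ fun c hc => le_min (hr c hc).1 ?_
    rw [le_div_iff₀ hM₁]
    have h := (hr c hc).2
    rw [div_mul_eq_mul_div, div_add_one (by linarith), div_le_iff₀ (by linarith)] at h
    linarith
  have hMb : M * #b ≤ M * m - u := by nlinarith
  have hb := mul_le_mul_of_nonneg_right hMb hR₀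
  suffices M * (u + #b * R) ≤ M * (ρ * m) by nlinarith
  rcases le_or_gt R M with hRle | hRgt
  · nlinarith [mul_le_mul_of_nonneg_right hu (sub_nonneg.2 hRle)]
  · nlinarith [mul_nonneg hu₀ (sub_nonneg.2 hRgt.le),
      mul_nonneg (mul_nonneg (by linarith : 0 ≤ M) (hu₀.trans hu)) (sub_nonneg.2 hRρ)]

def untouchedCycles (π σ : Perm (Fin n)) : Finset (Perm (Fin n)) :=
  {c ∈ π.cycleFactorsFinset | Disjoint c.support σ.support}

section Approximation

variable {π : Perm (Fin n)}

theorem card_support_mem_Icc (hπ : Feasible k W π) {c : Perm (Fin n)}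
    (hc : c ∈ π.cycleFactorsFinset) : #c.support ∈ Icc 2 k :=
  mem_Icc.2 ⟨(mem_cycleFactorsFinset_iff.1 hc).1.two_le_card_support,
    (feasible_iff_forall_cycleFactorsFinset.1 hπ c hc).1⟩

theorem mem_stageSols_of_subset_untouchedCycles (hπ : Feasible k W π) {τ : Perm (Fin n)}
    (hτ : τ.cycleFactorsFinset ⊆ untouchedCycles π σ)
    (hv : ∀ c ∈ τ.cycleFactorsFinset, lam #c.support = v) :
    τ ∈ stageSols W (lengthClass k lam v) σ.supportᶜ := by
  refine mem_stageSols.2 fun c hc => ?_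
  obtain ⟨hcπ, hdisj⟩ := mem_filter.1 (hτ hc)
  exact ⟨subset_compl_iff_disjoint_right.2 hdisj,
    mem_filter.2 ⟨card_support_mem_Icc hπ hcπ, hv c hc⟩,
    (feasible_iff_forall_cycleFactorsFinset.1 hπ c hcπ).2⟩

-- Otherwise the stage could be enlarged by the cycle `c`.
theorem lam_ne_of_disjoint_stage (hπ : Feasible k W π) {c : Perm (Fin n)}
    (hc : c ∈ untouchedCycles π σ) (hdisj : Disjoint c.support (stage k lam W v σ).support) :
    lam #c.support ≠ v := by
  intro hcv
  have hcyc := (mem_cycleFactorsFinset_iff.1 (mem_filter.1 hc).1).1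
  have hd : (stage k lam W v σ).Disjoint c := disjoint_iff_disjoint_support.2 hdisj.symm
  have hmem := mul_mem_stageSols stage_mem (mem_stageSols_of_subset_untouchedCycles hπ
    (by rw [hcyc.cycleFactorsFinset_eq_singleton]; exact singleton_subset_iff.2 hc)
    (by rw [hcyc.cycleFactorsFinset_eq_singleton]; simpa using hcv)) hd
  have := card_support_le_stage hmem
  rw [hd.card_support_mul] at this
  have := hcyc.two_le_card_support
  omega

theorem sum_card_support_le_stage (hπ : Feasible k W π) {s : Finset (Perm (Fin n))}
    (hs : s ⊆ untouchedCycles π σ) (hv : ∀ c ∈ s, lam #c.support = v) :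
    ∑ c ∈ s, #c.support ≤ #(stage k lam W v σ).support := by
  obtain ⟨τ, rfl⟩ := exists_cycleFactorsFinset_eq (hs.trans (filter_subset _ _))
  rw [← card_support_eq_sum_cycleFactorsFinset]
  exact card_support_le_stage (mem_stageSols_of_subset_untouchedCycles hπ hs hv)

theorem sum_cycleWelfare_hit_le (hlam : IsLengthFunction k lam) (hρ : 1 ≤ rho k lam)
    (hπ : Feasible k W π) (hv : v ∈ (Icc 2 k).image lam)
    (hle : ∀ c ∈ untouchedCycles π σ, lam #c.support ≤ v) :
    ∑ c ∈ untouchedCycles π σ with ¬Disjoint c.support (stage k lam W v σ).support,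
        cycleWelfare lam c ≤ rho k lam * (v * #(stage k lam W v σ).support) := by
  set m := #(stage k lam W v σ).support
  set T := {c ∈ untouchedCycles π σ | ¬Disjoint c.support (stage k lam W v σ).support}
  have hTu : T ⊆ untouchedCycles π σ := filter_subset _ _
  have hTπ : T ⊆ π.cycleFactorsFinset := hTu.trans (filter_subset _ _)
  obtain ⟨M, hM, hMmax⟩ := exists_max_lengthClass hv
  obtain ⟨hMIcc, rfl⟩ := mem_filter.1 hM
  obtain ⟨hM₂, hMk⟩ := mem_Icc.1 hMIcc
  set a := {c ∈ T | lam #c.support = lam M}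
  set b := {c ∈ T | ¬lam #c.support = lam M}
  have hcard : #a + #b ≤ m := by
    rw [card_filter_add_card_filter_not]
    exact card_le_card_of_forall_not_disjoint
      ((pairwiseDisjoint_support_cycleFactorsFinset π).subset (coe_subset.2 hTπ))
      fun c hc => (mem_filter.1 hc).2
  have hu : ∑ c ∈ a, #c.support ≤ m :=
    sum_card_support_le_stage hπ ((filter_subset _ _).trans hTu) fun c hc => (mem_filter.1 hc).2
  have huM : ∑ c ∈ a, #c.support ≤ #a * M :=
    sum_le_card_nsmul _ _ _ fun c hc => hMmax _ <|
      mem_filter.2 ⟨card_support_mem_Icc hπ (hTπ (mem_filter.1 hc).1), (mem_filter.1 hc).2⟩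
  have hr : ∀ c ∈ b, cycleWelfare lam c / lam M ≤ rho k lam ∧
      ((M : ℝ) - 1) / M * (cycleWelfare lam c / lam M) + 1 ≤ rho k lam := fun c hc => by
    obtain ⟨hcT, hcv⟩ := mem_filter.1 hc
    obtain ⟨hL₂, hLk⟩ := mem_Icc.1 (card_support_mem_Icc hπ (hTπ hcT))
    exact rho_bounds_of_lam_lt hlam hM₂ hMk hL₂ hLk (lt_of_le_of_ne (hle c (hTu hcT)) hcv)
  have key := add_sum_le_mul (u := ((∑ c ∈ a, #c.support : ℕ) : ℝ)) (t := #a) (m := m)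
    (by exact_mod_cast hM₂) hρ (Nat.cast_nonneg _)
    (by exact_mod_cast hu) (by rw [mul_comm]; exact_mod_cast huM)
    (by exact_mod_cast hcard) hr
  have hv₀ : 0 < lam M := (hlam.1 M hM₂ hMk).1
  rw [← sum_filter_add_sum_filter_not T fun c => lam #c.support = lam M]
  calc ∑ c ∈ a, cycleWelfare lam c + ∑ c ∈ b, cycleWelfare lam c
      = lam M * ((∑ c ∈ a, #c.support : ℕ) + ∑ c ∈ b, cycleWelfare lam c / lam M) := by
        rw [mul_add, Nat.cast_sum, mul_sum, mul_sum]
        congr 1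
        · exact sum_congr rfl fun c hc => by rw [cycleWelfare, (mem_filter.1 hc).2, mul_comm]
        · exact sum_congr rfl fun c _ => by field_simp
    _ ≤ lam M * (rho k lam * m) := mul_le_mul_of_nonneg_left key hv₀.le
    _ = rho k lam * (lam M * m) := by ring

theorem sum_cycleWelfare_untouched_le_run (hlam : IsLengthFunction k lam) (hρ : 1 ≤ rho k lam)
    (hπ : Feasible k W π) (vs : List ℝ) (hsort : vs.Pairwise (· > ·))
    (hvs : ∀ v ∈ vs, v ∈ (Icc 2 k).image lam)
    (hσ : ∀ c ∈ untouchedCycles π σ, lam #c.support ∈ vs) :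
    ∑ c ∈ untouchedCycles π σ, cycleWelfare lam c ≤
      rho k lam * (SW lam (run k lam W vs σ) - SW lam σ) := by
  induction vs generalizing σ with
  | nil =>
    rw [eq_empty_of_forall_notMem fun c hc => List.not_mem_nil (hσ c hc)]
    simp [run]
  | cons v vs ih =>
    have hd : σ.Disjoint (stage k lam W v σ) := disjoint_stage
    have hsplit : untouchedCycles π (σ * stage k lam W v σ) =
        {c ∈ untouchedCycles π σ | Disjoint c.support (stage k lam W v σ).support} := by
      simp only [untouchedCycles, filter_filter, hd.support_mul, disjoint_union_right]
    have hhit := sum_cycleWelfare_hit_le hlam hρ hπ (hvs v List.mem_cons_self) fun c hc =>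
      (List.mem_cons.1 (hσ c hc)).elim le_of_eq fun h => (List.rel_of_pairwise_cons hsort h).le
    have hrest := ih (σ := σ * stage k lam W v σ) hsort.of_cons
      (fun v' hv' => hvs v' (List.mem_cons_of_mem _ hv')) fun c hc => by
        rw [hsplit] at hc
        obtain ⟨hc, hdisj⟩ := mem_filter.1 hc
        exact (List.mem_cons.1 (hσ c hc)).resolve_left (lam_ne_of_disjoint_stage hπ hc hdisj)
    rw [← sum_filter_add_sum_filter_not _
      fun c => Disjoint c.support (stage k lam W v σ).support, ← hsplit, run]
    calc _ ≤ rho k lam * (SW lam (run k lam W vs (σ * stage k lam W v σ)) -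
            SW lam (σ * stage k lam W v σ)) + rho k lam * (v * #(stage k lam W v σ).support) :=
          add_le_add hrest hhit
      _ = _ := by rw [SW_mul_of_disjoint lam hd, SW_of_mem_stageSols stage_mem]; ring

end Approximation

theorem approxRatio_iterativeOptimal (hlam : IsLengthFunction k lam) (hnu : NonUniform k lam) :
    ApproxRatio k lam (iterativeOptimal k lam) (rho k lam) := by
  have hρ := one_le_rho hlam hnu
  refine ⟨hρ, fun n W _ π hπ => ?_⟩
  have h := sum_cycleWelfare_untouched_le_run (σ := 1) hlam hρ hπ (values k lam)
    pairwise_gt_values (fun v hv => mem_values.1 hv) fun c hc =>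
      mem_values.2 (mem_image_of_mem lam (card_support_mem_Icc hπ (mem_filter.1 hc).1))
  have huntouched : untouchedCycles π 1 = π.cycleFactorsFinset :=
    filter_true_of_mem fun c _ => by simp
  have hSW₁ : SW lam (1 : Perm (Fin n)) = 0 := by simp [SW, utility]
  rw [huntouched, ← SW_eq_sum_cycleWelfare, hSW₁, sub_zero] at h
  rw [ge_iff_le, one_div, inv_mul_le_iff₀ (by linarith)]
  exact h

theorem exists_truthful_mechanism_rho_approx_general
    (k : ℕ) (lam : ℕ → ℝ) (hlam : IsLengthFunction k lam)
    (hnu : NonUniform k lam) :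
    ∃ f : Mechanism,
      IsMechanism k f ∧ Truthful k lam f ∧ ApproxRatio k lam f (rho k lam) :=
  ⟨iterativeOptimal k lam, isMechanism_iterativeOptimal, truthful_iterativeOptimal hlam,
    approxRatio_iterativeOptimal hlam hnu⟩

/-- Theorem 5 of the paper.  For every length bound `k ≥ 3` and every
non-uniform length function `λ`, there exists a (not necessarily computationally
efficient) truthful `(k,λ)`-BE mechanism with approximation ratio `ρ(λ)`. -/
theorem exists_truthful_mechanism_rho_approx
    (k : ℕ) (hk : 3 ≤ k) (lam : ℕ → ℝ) (hlam : IsLengthFunction k lam)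
    (hnu : NonUniform k lam) :
    ∃ f : Mechanism,
      IsMechanism k f ∧ Truthful k lam f ∧ ApproxRatio k lam f (rho k lam) :=
  exists_truthful_mechanism_rho_approx_general k lam hlam hnu

end

end BarterExchange
end

section
/- For every integer length bound k ≥ 3 and every non-uniform length function λ, every truthful (k,λ)-BE mechanism that admits approximation ratio r satisfies r ≥ max{ v·λ(v)/λ(h) : 2 ≤ h < v ≤ k and λ(v) < λ(h) }. -/
/-!
Barter exchange (BE) framework, following Emek–Shpiro,
"Barter Exchange with Bounded Trading Cycles".
-/

open Finset

namespace BarterExchange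

noncomputable section

section Aux
open Equiv Equiv.Perm


theorem permCongr_pow {α β : Type*} (e : α ≃ β) (f : Equiv.Perm α) (m : ℕ) :
    (e.permCongr f) ^ m = e.permCongr (f ^ m) := by
  induction m with
  | zero => ext x; simp
  | succ m ih =>
    ext x
    simp only [pow_succ, Equiv.Perm.mul_apply, ih, Equiv.permCongr_apply,
      Equiv.symm_apply_apply]

theorem permCongr_inv {α β : Type*} (e : α ≃ β) (f : Equiv.Perm α) :
    (e.permCongr f)⁻¹ = e.permCongr f⁻¹ := by
  ext x
  simp [Equiv.Perm.inv_def, Equiv.permCongr_def]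

theorem permCongr_zpow {α β : Type*} (e : α ≃ β) (f : Equiv.Perm α) (m : ℤ) :
    (e.permCongr f) ^ m = e.permCongr (f ^ m) := by
  cases m with
  | ofNat m => simpa using permCongr_pow e f m
  | negSucc m =>
    simp only [zpow_negSucc, permCongr_pow, permCongr_inv]

theorem sameCycle_permCongr {α β : Type*} (e : α ≃ β) (f : Equiv.Perm α) {x y : α} :
    Equiv.Perm.SameCycle (e.permCongr f) (e x) (e y) ↔ f.SameCycle x y := by
  constructor
  · rintro ⟨m, hm⟩
    exact ⟨m, e.injective (by simpa [permCongr_zpow] using hm)⟩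
  · rintro ⟨m, hm⟩
    exact ⟨m, by simp [permCongr_zpow, hm]⟩

theorem support_cycleOf_permCongr {α β : Type*} [Fintype α] [DecidableEq α]
    [Fintype β] [DecidableEq β] (e : α ≃ β) (f : Equiv.Perm α) (x : α) :
    ((e.permCongr f).cycleOf (e x)).support = (f.cycleOf x).support.image e := by
  ext y
  obtain ⟨z, rfl⟩ := e.surjective y
  rw [Equiv.Perm.mem_support_cycleOf_iff, Finset.mem_image]
  constructor
  · rintro ⟨h1, h2⟩
    refine ⟨z, Equiv.Perm.mem_support_cycleOf_iff.2 ⟨(sameCycle_permCongr e f).1 h1, ?_⟩, rfl⟩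
    simp only [Equiv.Perm.mem_support] at h2 ⊢
    intro hc
    exact h2 (by simp [hc])
  · rintro ⟨w, hw, hwz⟩
    have hz : w = z := e.injective hwz
    subst hz
    rw [Equiv.Perm.mem_support_cycleOf_iff] at hw
    refine ⟨(sameCycle_permCongr e f).2 hw.1, ?_⟩
    simp only [Equiv.Perm.mem_support] at hw ⊢
    intro hc
    exact hw.2 (e.injective (by simpa using hc))

theorem card_support_cycleOf_permCongr {α β : Type*} [Fintype α] [DecidableEq α]
    [Fintype β] [DecidableEq β] (e : α ≃ β) (f : Equiv.Perm α) (x : α) :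
    ((e.permCongr f).cycleOf (e x)).support.card = (f.cycleOf x).support.card := by
  rw [support_cycleOf_permCongr, Finset.card_image_of_injective _ e.injective]



-- finRotate helpers
theorem finRotate_ne (m : ℕ) (hm : 2 ≤ m) (x : Fin m) : finRotate m x ≠ x := by
  have := support_finRotate_of_le hm
  have hx : x ∈ (finRotate m).support := by rw [this]; exact Finset.mem_univ x
  exact Equiv.Perm.mem_support.1 hx

theorem finRotate_exists_pow (m : ℕ) (hm : 2 ≤ m) (a b : Fin m) :
    ∃ i : ℕ, ((finRotate m) ^ i) a = b :=
  (isCycle_finRotate_of_le hm).exists_pow_eq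
    (finRotate_ne m hm a) (finRotate_ne m hm b)

theorem finRotate_val_mk {m s : ℕ} (hs : s + 1 < m) (hlt : s < m) :
    finRotate m ⟨s, hlt⟩ = ⟨s + 1, hs⟩ := by
  cases m with
  | zero => omega
  | succ m =>
    rw [finRotate_succ_apply]
    ext
    simp [Fin.add_def, Nat.mod_eq_of_lt hs]

theorem finRotate_last' {m : ℕ} [NeZero m] (hm : 2 ≤ m) (t : Fin m) (ht : (t : ℕ) = m - 1) :
    finRotate m t = 0 := by
  cases m with
  | zero => omega
  | succ m =>
    rw [finRotate_succ_apply]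
    ext
    rw [Fin.add_def]
    simp only [Fin.val_one', Fin.val_zero]
    have h1 : 1 % (m + 1) = 1 := Nat.mod_eq_of_lt (by omega)
    rw [h1, ht]
    simp

theorem finRotate_val_succ {m : ℕ} [NeZero m] (hm : 2 ≤ m) (t : Fin m) (ht : finRotate m t ≠ 0) :
    (finRotate m t : ℕ) = (t : ℕ) + 1 := by
  rcases Nat.lt_or_ge ((t : ℕ) + 1) m with hlt | hge
  · rw [show t = ⟨(t : ℕ), t.isLt⟩ from rfl, finRotate_val_mk hlt]
  · exact absurd (finRotate_last' hm t (by omega)) ht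

theorem finRotate_eq_zero {m : ℕ} [NeZero m] (hm : 2 ≤ m) (t : Fin m) (ht : finRotate m t = 0) :
    (t : ℕ) = m - 1 := by
  by_contra hc
  have h1 : (t : ℕ) + 1 < m := by have := t.isLt; omega
  rw [show t = ⟨(t : ℕ), t.isLt⟩ from rfl, finRotate_val_mk h1] at ht
  have := congrArg Fin.val ht
  simp [Fin.val_zero] at this


section Construction

variable {h v : ℕ} [NeZero h] [NeZero v]

/-- The permutation cycling the special agents `(g, 0)`. -/
def sigmaPerm (h v : ℕ) [NeZero h] [NeZero v] : Equiv.Perm (Fin h × Fin v) where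
  toFun x := if x.2 = 0 then (finRotate h x.1, x.2) else x
  invFun x := if x.2 = 0 then ((finRotate h).symm x.1, x.2) else x
  left_inv := by rintro ⟨g, t⟩; by_cases ht : t = 0 <;> simp [ht]
  right_inv := by rintro ⟨g, t⟩; by_cases ht : t = 0 <;> simp [ht]

theorem sigma_apply_zero (g : Fin h) :
    sigmaPerm h v (g, 0) = (finRotate h g, 0) := by simp [sigmaPerm, Equiv.coe_fn_mk]

theorem sigma_apply_ne {t : Fin v} (ht : t ≠ 0) (g : Fin h) :
    sigmaPerm h v (g, t) = (g, t) := by simp [sigmaPerm, Equiv.coe_fn_mk, ht]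

/-- The permutation rotating every gadget (product of the `h` gadget `v`-cycles). -/
def rhoPerm (h v : ℕ) [NeZero v] : Equiv.Perm (Fin h × Fin v) :=
  (Equiv.refl (Fin h)).prodCongr (finRotate v)

theorem rho_apply (g : Fin h) (t : Fin v) :
    rhoPerm h v (g, t) = (g, finRotate v t) := rfl

/-- The true wish lists. -/
def trueW (h v : ℕ) [NeZero h] [NeZero v] (x : Fin h × Fin v) : Finset (Fin h × Fin v) :=
  if x.2 = 0 then {(x.1, finRotate v x.2), (finRotate h x.1, 0)} else {(x.1, finRotate v x.2)}

/-- The partially revealed wish lists: the special agent of gadget `g` hides her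
gadget successor unless `g ∈ P`. -/
def WP (P : Finset (Fin h)) (x : Fin h × Fin v) : Finset (Fin h × Fin v) :=
  if x.2 = 0 ∧ x.1 ∉ P then {(finRotate h x.1, 0)} else trueW h v x

theorem WP_subset_trueW (P : Finset (Fin h)) (x : Fin h × Fin v) :
    WP P x ⊆ trueW h v x := by
  unfold WP
  split
  · rename_i hx
    rw [trueW, if_pos hx.1]
    intro y hy
    rw [Finset.mem_singleton] at hy
    subst hy
    simp
  · exact fun y hy => hy

theorem WP_ne_zero (P : Finset (Fin h)) {t : Fin v} (ht : t ≠ 0) (g : Fin h) :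
    WP P (g, t) = {(g, finRotate v t)} := by
  simp [WP, trueW, ht]

theorem WP_zero_cases (P : Finset (Fin h)) (g : Fin h) {y : Fin h × Fin v}
    (hy : y ∈ WP P (g, 0)) :
    y = (g, finRotate v 0) ∨ y = (finRotate h g, 0) := by
  have := WP_subset_trueW P (g, 0) hy
  rw [trueW, if_pos rfl, Finset.mem_insert, Finset.mem_singleton] at this
  exact this

theorem WP_univ (x : Fin h × Fin v) : WP Finset.univ x = trueW h v x := by
  simp [WP]

theorem mem_trueW_self (x : Fin h × Fin v) (hh : 2 ≤ h) (hv : 2 ≤ v) :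
    x ∉ trueW h v x := by
  obtain ⟨g, t⟩ := x
  rw [trueW]
  split
  · rw [Finset.mem_insert, Finset.mem_singleton]
    rintro (hc | hc)
    · exact finRotate_ne v hv t (Prod.ext_iff.1 hc.symm).2
    · exact finRotate_ne h hh g (Prod.ext_iff.1 hc.symm).1
  · rw [Finset.mem_singleton]
    intro hc
    exact finRotate_ne v hv t (Prod.ext_iff.1 hc.symm).2

end Construction

section Structure

variable {h v : ℕ} [NeZero h] [NeZero v] {P : Finset (Fin h)}
  {π : Equiv.Perm (Fin h × Fin v)}

/-- If an interior agent partakes, then the special agent of its gadget partakes. -/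
theorem climb_up (hw : ∀ x, π x ≠ x → π x ∈ WP P x) (hv : 2 ≤ v) :
    ∀ s : ℕ, ∀ t : Fin v, v ≤ (t : ℕ) + s → ∀ g : Fin h,
      π (g, t) ≠ (g, t) → π (g, 0) ≠ (g, 0) := by
  intro s
  induction s with
  | zero => intro t hts; exact absurd hts (by have := t.isLt; omega)
  | succ s ih =>
    intro t hts g hne
    by_cases ht : t = 0
    · subst ht; exact hne
    · have hmem := hw _ hne
      rw [WP_ne_zero P ht, Finset.mem_singleton] at hmem
      have hne2 : π (g, finRotate v t) ≠ (g, finRotate v t) := by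
        intro hc
        have := π.injective (hc.trans hmem.symm)
        exact finRotate_ne v hv t (Prod.ext_iff.1 this).2
      by_cases hz : finRotate v t = 0
      · rw [hz] at hne2; exact hne2
      · exact ih (finRotate v t)
          (by rw [finRotate_val_succ hv t hz]; omega) g hne2

/-- If the special agent of gadget `g` moves inside her gadget, the whole gadget cycles. -/
theorem climb_down (hw : ∀ x, π x ≠ x → π x ∈ WP P x) (hv : 2 ≤ v) (g : Fin h)
    (h0 : π (g, 0) = (g, finRotate v 0)) :
    ∀ t : Fin v, π (g, t) = (g, finRotate v t) := by
  have key : ∀ s : ℕ, ∀ hs : s < v, π (g, ⟨s, hs⟩) = (g, finRotate v ⟨s, hs⟩) := by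
    intro s
    induction s with
    | zero =>
      intro hs
      have h00 : (⟨0, hs⟩ : Fin v) = 0 := by ext; simp
      rw [h00]; exact h0
    | succ s ih =>
      intro hs
      have hs' : s < v := by omega
      have hrot : finRotate v ⟨s, hs'⟩ = ⟨s + 1, hs⟩ := finRotate_val_mk hs hs'
      have hprev : π (g, ⟨s, hs'⟩) = (g, ⟨s + 1, hs⟩) := by rw [ih hs', hrot]
      have ht0 : (⟨s + 1, hs⟩ : Fin v) ≠ 0 := by
        intro hc; exact absurd (congrArg Fin.val hc) (by simp)
      have hne : π (g, ⟨s + 1, hs⟩) ≠ (g, ⟨s + 1, hs⟩) := by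
        intro hc
        have := π.injective (hc.trans hprev.symm)
        have := congrArg (fun x => (Fin.val x.2)) this
        simp at this
      have hmem := hw _ hne
      rwa [WP_ne_zero P ht0, Finset.mem_singleton] at hmem
  intro t
  have : t = ⟨(t : ℕ), t.isLt⟩ := rfl
  rw [this]; exact key _ _

/-- If one special agent moves to the next special agent, so does the next one. -/
theorem special_step (hw : ∀ x, π x ≠ x → π x ∈ WP P x) (hh : 2 ≤ h) (hv : 2 ≤ v)
    {a : Fin h} (ha : π (a, 0) = (finRotate h a, 0)) :
    π (finRotate h a, 0) = (finRotate h (finRotate h a), 0) := by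
  set b := finRotate h a with hb
  have hba : b ≠ a := fun hc => finRotate_ne h hh a hc
  have hbpart : π (b, 0) ≠ (b, 0) := by
    intro hc
    have := π.injective (hc.trans ha.symm)
    exact hba ((Prod.ext_iff.1 this).1 : b = a)
  rcases WP_zero_cases P b (hw _ hbpart) with hcase | hcase
  · exfalso
    have hall := climb_down hw hv b hcase
    have hlast : π (b, ⟨v - 1, by omega⟩) = (b, 0) := by
      rw [hall ⟨v - 1, by omega⟩, finRotate_last' hv _ (by simp)]
    have := π.injective (hlast.trans ha.symm)
    have := congrArg (fun x => (Fin.val x.2)) this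
    simp at this
    omega
  · exact hcase

/-- If some special agent moves to the next special agent, all of them do. -/
theorem all_specials (hw : ∀ x, π x ≠ x → π x ∈ WP P x) (hh : 2 ≤ h) (hv : 2 ≤ v)
    {a : Fin h} (ha : π (a, 0) = (finRotate h a, 0)) :
    ∀ g : Fin h, π (g, 0) = (finRotate h g, 0) := by
  have key : ∀ m : ℕ, π ((finRotate h ^ m) a, 0) = (finRotate h ((finRotate h ^ m) a), 0) := by
    intro m
    induction m with
    | zero => simpa using ha
    | succ m ih =>
      have : (finRotate h ^ (m + 1)) a = finRotate h ((finRotate h ^ m) a) := by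
        rw [pow_succ', Equiv.Perm.mul_apply]
      rw [this]
      exact special_step hw hh hv ih
  intro g
  obtain ⟨m, hm⟩ := finRotate_exists_pow h hh a g
  rw [← hm]; exact key m

/-- If all special agents cycle, the interior agents are fixed. -/
theorem interior_fixed (hw : ∀ x, π x ≠ x → π x ∈ WP P x) (hh : 2 ≤ h) (hv : 2 ≤ v)
    (hall : ∀ g : Fin h, π (g, 0) = (finRotate h g, 0)) :
    ∀ (g : Fin h) (t : Fin v), t ≠ 0 → π (g, t) = (g, t) := by
  suffices H : ∀ s : ℕ, ∀ t : Fin v, t ≠ 0 → v ≤ (t : ℕ) + s → ∀ g, π (g, t) = (g, t) by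
    exact fun g t ht => H v t ht (by omega) g
  intro s
  induction s with
  | zero => intro t ht hts; exact absurd hts (by have := t.isLt; omega)
  | succ s ih =>
    intro t ht hts g
    by_contra hne
    have hmem := hw _ hne
    rw [WP_ne_zero P ht, Finset.mem_singleton] at hmem
    by_cases hz : finRotate v t = 0
    · have hg' : π ((finRotate h).symm g, 0) = (g, 0) := by
        rw [hall ((finRotate h).symm g), Equiv.apply_symm_apply]
      rw [hz] at hmem
      have := π.injective (hmem.trans hg'.symm)
      exact ht (Prod.ext_iff.1 this).2
    · have hfix := ih (finRotate v t) hz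
        (by rw [finRotate_val_succ hv t hz]; omega) g
      have := π.injective (hmem.trans hfix.symm)
      exact finRotate_ne v hv t ((Prod.ext_iff.1 this).2).symm

/-- The main structure lemma: a feasible exchange in which some special agent moves to
the next special agent must be `sigmaPerm`. -/
theorem eq_sigma (hw : ∀ x, π x ≠ x → π x ∈ WP P x) (hh : 2 ≤ h) (hv : 2 ≤ v)
    {a : Fin h} (ha : π (a, 0) = (finRotate h a, 0)) :
    π = sigmaPerm h v := by
  have hall := all_specials hw hh hv ha
  have hfix := interior_fixed hw hh hv hall
  apply Equiv.ext
  rintro ⟨g, t⟩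
  by_cases ht : t = 0
  · subst ht; rw [hall g, sigma_apply_zero]
  · rw [hfix g t ht, sigma_apply_ne ht]

end Structure

section Cycles

variable {h v : ℕ} [NeZero h] [NeZero v] {π : Equiv.Perm (Fin h × Fin v)}

theorem pow_gadget {b : Fin h} (hb : ∀ t, π (b, t) = (b, finRotate v t)) :
    ∀ (m : ℕ) (t : Fin v), (π ^ m) (b, t) = (b, (finRotate v ^ m) t) := by
  intro m
  induction m with
  | zero => intro t; simp
  | succ m ih =>
    intro t
    rw [pow_succ', pow_succ', Equiv.Perm.mul_apply, Equiv.Perm.mul_apply, ih, hb]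

theorem cyclen_gadget (hv : 2 ≤ v) {b : Fin h} (hb : ∀ t, π (b, t) = (b, finRotate v t))
    (t0 : Fin v) : ((π.cycleOf (b, t0)).support).card = v := by
  have hsupp : (π.cycleOf (b, t0)).support = {b} ×ˢ Finset.univ := by
    ext ⟨g, t⟩
    rw [Equiv.Perm.mem_support_cycleOf_iff]
    constructor
    · rintro ⟨hsc, -⟩
      obtain ⟨m, -, hm⟩ := hsc.exists_pow_eq'
      rw [pow_gadget hb] at hm
      have : b = g := (Prod.ext_iff.1 hm).1
      subst this
      simp
    · intro hmem
      rw [Finset.mem_product, Finset.mem_singleton] at hmem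
      obtain ⟨rfl, -⟩ := hmem.imp id id
      refine ⟨?_, ?_⟩
      · obtain ⟨m, hm⟩ := finRotate_exists_pow v hv t0 t
        exact ⟨(m : ℤ), by rw [zpow_natCast, pow_gadget hb, hm]⟩
      · rw [Equiv.Perm.mem_support, hb t0]
        intro hc
        exact finRotate_ne v hv t0 ((Prod.ext_iff.1 hc).2)
  rw [hsupp, Finset.card_product, Finset.card_singleton, Finset.card_univ,
    Fintype.card_fin, one_mul]

theorem pow_sigma : ∀ (m : ℕ) (g : Fin h),
    (sigmaPerm h v ^ m) (g, 0) = ((finRotate h ^ m) g, 0) := by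
  intro m
  induction m with
  | zero => intro g; simp
  | succ m ih =>
    intro g
    rw [pow_succ', pow_succ', Equiv.Perm.mul_apply, Equiv.Perm.mul_apply, ih,
      sigma_apply_zero]

theorem cyclen_sigma (hh : 2 ≤ h) (hv : 2 ≤ v) (g : Fin h) :
    (((sigmaPerm h v).cycleOf (g, 0)).support).card = h := by
  have hsupp : ((sigmaPerm h v).cycleOf (g, 0)).support
      = Finset.univ ×ˢ {(0 : Fin v)} := by
    ext ⟨g', t⟩
    rw [Equiv.Perm.mem_support_cycleOf_iff]
    constructor
    · rintro ⟨hsc, -⟩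
      obtain ⟨m, -, hm⟩ := hsc.exists_pow_eq'
      rw [pow_sigma] at hm
      have : (0 : Fin v) = t := (Prod.ext_iff.1 hm).2
      subst this
      simp
    · intro hmem
      rw [Finset.mem_product, Finset.mem_singleton] at hmem
      obtain ⟨-, rfl⟩ := hmem.imp id id
      refine ⟨?_, ?_⟩
      · obtain ⟨m, hm⟩ := finRotate_exists_pow h hh g g'
        exact ⟨(m : ℤ), by rw [zpow_natCast, pow_sigma, hm]⟩
      · rw [Equiv.Perm.mem_support, sigma_apply_zero]
        intro hc
        exact finRotate_ne h hh g ((Prod.ext_iff.1 hc).1)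
  rw [hsupp, Finset.card_product, Finset.card_singleton, Finset.card_univ,
    Fintype.card_fin, mul_one]

end Cycles

section Transfer

variable {h v : ℕ} [NeZero h] [NeZero v]

/-- Lift wish lists from `Fin h × Fin v` to `Fin (h * v)`. -/
def LW (W : Fin h × Fin v → Finset (Fin h × Fin v)) (i : Fin (h * v)) : Finset (Fin (h * v)) :=
  (W (finProdFinEquiv.symm i)).image finProdFinEquiv

/-- Lift permutations from `Fin h × Fin v` to `Fin (h * v)`. -/
def liftPerm (π : Equiv.Perm (Fin h × Fin v)) : Equiv.Perm (Fin (h * v)) :=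
  finProdFinEquiv.permCongr π

theorem liftPerm_apply (π : Equiv.Perm (Fin h × Fin v)) (x : Fin h × Fin v) :
    liftPerm π (finProdFinEquiv x) = finProdFinEquiv (π x) := by
  simp [liftPerm]

theorem liftPerm_pull (ρ : Equiv.Perm (Fin (h * v))) :
    liftPerm ((finProdFinEquiv.symm :
      Fin (h * v) ≃ Fin h × Fin v).permCongr ρ) = ρ := by
  apply Equiv.ext
  intro i
  simp only [liftPerm, Equiv.permCongr_apply, Equiv.symm_symm, Equiv.apply_symm_apply]

theorem LW_mono {W W' : Fin h × Fin v → Finset (Fin h × Fin v)}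
    (hs : ∀ x, W x ⊆ W' x) (j : Fin (h * v)) : LW W j ⊆ LW W' j :=
  Finset.image_subset_image (hs _)

theorem LW_mem {W : Fin h × Fin v → Finset (Fin h × Fin v)} {x y : Fin h × Fin v} :
    finProdFinEquiv y ∈ LW W (finProdFinEquiv x) ↔ y ∈ W x := by
  unfold LW
  rw [Equiv.symm_apply_apply, Finset.mem_image]
  constructor
  · rintro ⟨z, hz, hzy⟩
    rwa [← finProdFinEquiv.injective hzy]
  · exact fun hy => ⟨y, hy, rfl⟩

end Transfer


section Glue

variable {h v : ℕ} [NeZero h] [NeZero v]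

theorem utility_lift (lam : ℕ → ℝ) (π : Equiv.Perm (Fin h × Fin v)) (x : Fin h × Fin v) :
    utility lam (liftPerm π) (finProdFinEquiv x)
      = if π x ≠ x then lam ((π.cycleOf x).support.card) else 0 := by
  have happ : liftPerm π (finProdFinEquiv x) = finProdFinEquiv (π x) := liftPerm_apply π x
  have hlen : cycLen (liftPerm π) (finProdFinEquiv x) = ((π.cycleOf x).support).card := by
    unfold cycLen liftPerm
    exact card_support_cycleOf_permCongr _ π x
  unfold utility
  rw [happ, hlen]
  by_cases hx : π x = x
  · rw [hx]; simp
  · rw [if_pos (by simpa using fun hc => hx (finProdFinEquiv.injective hc)), if_pos hx]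

theorem SW_lift (lam : ℕ → ℝ) (π : Equiv.Perm (Fin h × Fin v)) :
    SW lam (liftPerm π)
      = ∑ x : Fin h × Fin v,
          (if π x ≠ x then lam ((π.cycleOf x).support.card) else 0) := by
  unfold SW
  rw [← Equiv.sum_comp (finProdFinEquiv : Fin h × Fin v ≃ Fin (h * v))
    (fun i => utility lam (liftPerm π) i)]
  exact Finset.sum_congr rfl fun x _ => utility_lift lam π x

theorem feasible_lift {k : ℕ} (W : Fin h × Fin v → Finset (Fin h × Fin v))
    (π : Equiv.Perm (Fin h × Fin v)) :
    Feasible k (LW W) (liftPerm π)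
      ↔ ∀ x, π x ≠ x → π x ∈ W x ∧ ((π.cycleOf x).support).card ≤ k := by
  have hlen : ∀ x, cycLen (liftPerm π) (finProdFinEquiv x) = ((π.cycleOf x).support).card := by
    intro x
    unfold cycLen liftPerm
    exact card_support_cycleOf_permCongr _ π x
  constructor
  · intro hf x hx
    have hne : liftPerm π (finProdFinEquiv x) ≠ finProdFinEquiv x := by
      rw [liftPerm_apply]
      simpa using fun hc => hx (finProdFinEquiv.injective hc)
    obtain ⟨hm, hl⟩ := hf _ hne
    rw [liftPerm_apply] at hm
    refine ⟨LW_mem.1 hm, ?_⟩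
    rwa [hlen x] at hl
  · intro hf i hi
    obtain ⟨x, rfl⟩ := finProdFinEquiv.surjective i
    rw [liftPerm_apply] at hi ⊢
    have hx : π x ≠ x := fun hc => hi (by rw [hc])
    obtain ⟨hm, hl⟩ := hf x hx
    refine ⟨LW_mem.2 hm, ?_⟩
    rw [hlen x]
    exact hl

theorem isWishList_LW (hh : 2 ≤ h) (hv : 2 ≤ v) (P : Finset (Fin h)) :
    IsWishList (LW (WP (v := v) P)) := by
  intro i
  obtain ⟨x, rfl⟩ := finProdFinEquiv.surjective i
  intro hx
  exact mem_trueW_self x hh hv (WP_subset_trueW P x (LW_mem.1 hx))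

theorem LW_apply (W : Fin h × Fin v → Finset (Fin h × Fin v)) (x : Fin h × Fin v) :
    LW W (finProdFinEquiv x) = (W x).image finProdFinEquiv := by
  unfold LW
  congr 1
  rw [Equiv.symm_apply_apply]

theorem WP_insert_self (P : Finset (Fin h)) (g : Fin h) :
    WP (insert g P) (g, (0 : Fin v)) = trueW h v (g, 0) := by
  unfold WP
  simp

theorem WP_insert_other (P : Finset (Fin h)) (g : Fin h) {x : Fin h × Fin v}
    (hx : x ≠ (g, 0)) : WP (insert g P) x = WP P x := by
  obtain ⟨g', t⟩ := x
  unfold WP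
  by_cases ht : t = 0
  · subst ht
    have hg' : g' ≠ g := fun hc => hx (by rw [hc])
    simp [hg']
  · simp [ht]

theorem update_LW (P : Finset (Fin h)) (g : Fin h) :
    Function.update (LW (WP P)) (finProdFinEquiv (g, (0 : Fin v)))
        (LW (trueW h v) (finProdFinEquiv (g, (0 : Fin v))))
      = LW (WP (insert g P)) := by
  funext i
  obtain ⟨x, rfl⟩ := finProdFinEquiv.surjective i
  by_cases hi : x = (g, (0 : Fin v))
  · subst hi
    rw [Function.update_self, LW_apply, LW_apply, WP_insert_self]
  · rw [Function.update_of_ne (by simpa using fun hc => hi (finProdFinEquiv.injective hc))]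
    rw [LW_apply, LW_apply, WP_insert_other P g hi]

theorem SW_sigma (lam : ℕ → ℝ) (hh : 2 ≤ h) (hv : 2 ≤ v) :
    SW lam (liftPerm (sigmaPerm h v)) = (h : ℝ) * lam h := by
  rw [SW_lift]
  have hterm : ∀ x : Fin h × Fin v,
      (if sigmaPerm h v x ≠ x then lam (((sigmaPerm h v).cycleOf x).support.card) else 0)
        = (if x.2 = 0 then lam h else 0) := by
    rintro ⟨g, t⟩
    by_cases ht : t = 0
    · subst ht
      have hne : sigmaPerm h v (g, 0) ≠ (g, 0) := by
        rw [sigma_apply_zero]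
        intro hc
        exact finRotate_ne h hh g (congrArg Prod.fst hc)
      rw [if_pos hne, if_pos rfl, cyclen_sigma hh hv]
    · rw [if_neg (by simp [sigma_apply_ne ht]), if_neg ht]
  rw [Finset.sum_congr rfl fun x _ => hterm x, Fintype.sum_prod_type]
  have hinner : ∀ g : Fin h, (∑ t : Fin v, if t = 0 then lam h else 0) = lam h := by
    intro g; simp
  rw [Finset.sum_congr rfl fun g _ => hinner g, Finset.sum_const, Finset.card_univ,
    Fintype.card_fin, nsmul_eq_mul]

theorem SW_rho (lam : ℕ → ℝ) (hv : 2 ≤ v) :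
    SW lam (liftPerm (rhoPerm h v)) = ((h : ℝ) * v) * lam v := by
  rw [SW_lift]
  have hterm : ∀ x : Fin h × Fin v,
      (if rhoPerm h v x ≠ x then lam (((rhoPerm h v).cycleOf x).support.card) else 0)
        = lam v := by
    rintro ⟨g, t⟩
    have hne : rhoPerm h v (g, t) ≠ (g, t) := by
      rw [rho_apply]
      intro hc
      exact finRotate_ne v hv t (congrArg Prod.snd hc)
    rw [if_pos hne, cyclen_gadget hv (fun t => rho_apply g t) t]
  rw [Finset.sum_congr rfl fun x _ => hterm x, Finset.sum_const, Finset.card_univ,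
    Fintype.card_prod, Fintype.card_fin, Fintype.card_fin, nsmul_eq_mul]
  push_cast
  ring

theorem sigma_feasible (hh : 2 ≤ h) (hv : 2 ≤ v) {k : ℕ} (hk : h ≤ k) (P : Finset (Fin h)) :
    Feasible k (LW (WP P)) (liftPerm (sigmaPerm h v)) := by
  rw [feasible_lift]
  rintro ⟨g, t⟩ hx
  by_cases ht : t = 0
  · subst ht
    constructor
    · rw [sigma_apply_zero]
      unfold WP
      split
      · simp
      · unfold trueW
        simp
    · rw [cyclen_sigma hh hv]
      exact hk
  · exact absurd (sigma_apply_ne ht g) hx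

theorem rho_feasible (hv : 2 ≤ v) {k : ℕ} (hk : v ≤ k) :
    Feasible k (LW (trueW h v)) (liftPerm (rhoPerm h v)) := by
  rw [feasible_lift]
  rintro ⟨g, t⟩ hx
  constructor
  · rw [rho_apply]
    unfold trueW
    by_cases ht : t = 0 <;> simp [ht]
  · rw [cyclen_gadget hv (fun t => rho_apply g t) t]
    exact hk

end Glue

end Aux

/-- Corollary: weak lower bound.  For every length bound `k ≥ 3` and
every non-uniform length function `λ`, every truthful `(k,λ)`-BE mechanism admitting
approximation ratio `r` satisfies `r ≥ v·λ(v)/λ(h)` for every pair `2 ≤ h < v ≤ k`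
with `λ(v) < λ(h)`. -/
theorem truthful_mechanism_weak_lower_bound
    (k : ℕ) (hk : 3 ≤ k) (lam : ℕ → ℝ) (hlam : IsLengthFunction k lam)
    (hnu : NonUniform k lam)
    (f : Mechanism) (hmech : IsMechanism k f) (htruth : Truthful k lam f)
    (r : ℝ) (happrox : ApproxRatio k lam f r) :
    ∀ h v : ℕ, 2 ≤ h → h < v → v ≤ k → lam v < lam h →
      (v : ℝ) * lam v / lam h ≤ r := by
  intro h v hh2 hhv hvk hvh
  haveI : NeZero h := ⟨by omega⟩
  haveI : NeZero v := ⟨by omega⟩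
  have hv2 : 2 ≤ v := by omega
  have hhk : h ≤ k := by omega
  have hr1 : (1 : ℝ) ≤ r := happrox.1
  have hr0 : (0 : ℝ) < r := by linarith
  have hlamh : 0 < lam h := (hlam.1 h hh2 hhk).1
  have hlamv : 0 < lam v := (hlam.1 v hv2 hvk).1
  have hhpos : (0 : ℝ) < (h : ℝ) := by exact_mod_cast Nat.pos_of_ne_zero (by omega)
  have hWuniv : LW (WP (Finset.univ : Finset (Fin h))) = LW (trueW h v) := by
    funext i
    unfold LW
    rw [WP_univ]
  have hWLtrue : IsWishList (LW (trueW h v)) := by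
    rw [← hWuniv]
    exact isWishList_LW hh2 hv2 Finset.univ
  -- the main induction: on every partially revealed instance the mechanism
  -- outputs the cycle of the special agents
  have main : ∀ P : Finset (Fin h),
      f (h * v) (LW (WP P)) = liftPerm (sigmaPerm h v) := by
    intro P
    induction P using Finset.induction_on with
    | empty =>
      set ρ := f (h * v) (LW (WP (∅ : Finset (Fin h)))) with hρ
      set π := (finProdFinEquiv.symm : Fin (h * v) ≃ Fin h × Fin v).permCongr ρ with hπ
      have hlift : liftPerm π = ρ := liftPerm_pull ρ
      have hfe : Feasible k (LW (WP (∅ : Finset (Fin h)))) (liftPerm π) := by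
        rw [hlift]
        exact hmech _ _ (isWishList_LW hh2 hv2 _)
      have hw := (feasible_lift _ _).1 hfe
      have happ := happrox.2 (h * v) (LW (WP (∅ : Finset (Fin h))))
        (isWishList_LW hh2 hv2 _) (liftPerm (sigmaPerm h v)) (sigma_feasible hh2 hv2 hhk _)
      rw [SW_sigma lam hh2 hv2] at happ
      have hpos : 0 < SW lam ρ :=
        lt_of_lt_of_le (mul_pos (by positivity) (mul_pos hhpos hlamh)) happ
      rw [← hlift, SW_lift] at hpos
      have hex : ∃ x : Fin h × Fin v, π x ≠ x := by
        by_contra hc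
        push_neg at hc
        rw [Finset.sum_congr rfl (fun x _ => if_neg (by simp [hc x]))] at hpos
        simp at hpos
      obtain ⟨⟨g, t⟩, hx⟩ := hex
      have hspecial : π (g, 0) ≠ (g, 0) := by
        by_cases ht : t = 0
        · subst ht; exact hx
        · exact climb_up (fun y hy => (hw y hy).1) hv2 v t (Nat.le_add_left v _) g hx
      have hmem := (hw _ hspecial).1
      have hWPe : WP (∅ : Finset (Fin h)) (g, (0 : Fin v)) = {(finRotate h g, 0)} := by
        unfold WP
        simp
      rw [hWPe, Finset.mem_singleton] at hmem
      rw [← hlift, eq_sigma (fun y hy => (hw y hy).1) hh2 hv2 hmem]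
    | @insert g P hg ih =>
      have htr := htruth (h * v) (LW (trueW h v)) (LW (WP P)) hWLtrue
        (fun j => LW_mono (WP_subset_trueW P) j) (finProdFinEquiv (g, (0 : Fin v)))
      rw [ih, update_LW P g] at htr
      set ρ' := f (h * v) (LW (WP (insert g P))) with hρ'
      set π' := (finProdFinEquiv.symm : Fin (h * v) ≃ Fin h × Fin v).permCongr ρ' with hπ'
      have hlift' : liftPerm π' = ρ' := liftPerm_pull ρ'
      have hfe' : Feasible k (LW (WP (insert g P))) (liftPerm π') := by
        rw [hlift']
        exact hmech _ _ (isWishList_LW hh2 hv2 _)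
      have hw' := (feasible_lift _ _).1 hfe'
      rw [utility_lift, ← hlift', utility_lift] at htr
      have hσne : sigmaPerm h v (g, 0) ≠ (g, 0) := by
        rw [sigma_apply_zero]
        intro hc
        exact finRotate_ne h hh2 g (congrArg Prod.fst hc)
      rw [if_pos hσne, cyclen_sigma hh2 hv2] at htr
      have hne' : π' (g, 0) ≠ (g, 0) := by
        intro hc
        rw [if_neg (by simp [hc])] at htr
        linarith
      rw [if_pos hne'] at htr
      rcases WP_zero_cases (insert g P) g ((hw' _ hne').1) with hcase | hcase
      · exfalso
        have hall := climb_down (fun y hy => (hw' y hy).1) hv2 g hcase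
        rw [cyclen_gadget hv2 hall (0 : Fin v)] at htr
        have hmono := hlam.2 h v hh2 (le_of_lt hhv) hvk
        linarith
      · rw [← hlift', eq_sigma (fun y hy => (hw' y hy).1) hh2 hv2 hcase]
  -- conclude via the approximation ratio on the fully revealed instance
  have hfin := main Finset.univ
  rw [hWuniv] at hfin
  have happ := happrox.2 (h * v) (LW (trueW h v)) hWLtrue
    (liftPerm (rhoPerm h v)) (rho_feasible hv2 hvk)
  rw [hfin, SW_sigma lam hh2 hv2, SW_rho lam hv2] at happ
  rw [div_le_iff₀ hlamh]
  have h1 : ((h : ℝ) * v) * lam v / r ≤ (h : ℝ) * lam h := by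
    rw [div_eq_inv_mul, ← one_div]
    exact happ
  have h2 : ((h : ℝ) * v) * lam v ≤ (h : ℝ) * lam h * r := (div_le_iff₀ hr0).1 h1
  nlinarith [h2, hhpos]

end

end BarterExchange
end

section
/- Let k ≥ 3, let λ be a non-uniform length function, and let 2 ≤ h < v ≤ k be integers with λ(v) < λ(h). Let W be the wish list vector of the (h,v)-comb instance and let π_H be the exchange whose unique trading cycle is the horizontal cycle c_H = (b_1 → b_2 → … → b_h → b_1). Then every truthful (k,λ)-BE mechanism f that admits approximation ratio r for some real r ≥ 1 satisfies f(W) = π_H. -/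
/-!
Barter exchange (BE) framework, following Emek–Shpiro,
"Barter Exchange with Bounded Trading Cycles".
-/

open Finset

namespace BarterExchange

noncomputable section

/-- The wish list vector of the `(h,v)`-comb instance, over agents `Fin h × Fin v`:
agent `(i, 0)` is the black agent `bᵢ` with wish list `{b_{i+1}, x_{i,1}}`
(black indices cyclic), and agent `(i, j)` for `j ≠ 0` is the white agent `x_{i,j}`
with wish list `{x_{i,j+1}}`, where `x_{i,v} := bᵢ` (white indices cyclic in `Fin v`). -/
def combW (h v : ℕ) : Fin h × Fin v → Finset (Fin h × Fin v) := fun p =>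
  if p.2.val = 0 then
    {(finRotate h p.1, p.2), (p.1, finRotate v p.2)}
  else
    {(p.1, finRotate v p.2)}

/-- The exchange `π_H` whose unique trading cycle is the horizontal cycle
`c_H = (b₁ → b₂ → … → b_h → b₁)`: it rotates the black agents and fixes all whites. -/
def piH (h v : ℕ) : Equiv.Perm (Fin h × Fin v) where
  toFun p := if p.2.val = 0 then (finRotate h p.1, p.2) else p
  invFun p := if p.2.val = 0 then ((finRotate h).symm p.1, p.2) else p
  left_inv := by
    rintro ⟨a, b⟩
    by_cases hb : b.val = 0 <;> simp only [hb, if_true, if_false, Equiv.symm_apply_apply, Equiv.apply_symm_apply, ite_true]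
  right_inv := by
    rintro ⟨a, b⟩
    by_cases hb : b.val = 0 <;> simp only [hb, if_true, if_false, Equiv.symm_apply_apply, Equiv.apply_symm_apply, ite_true]

/-!
Let `W_T` be the comb instance in which only the black agents `bᵢ` with `i ∈ T` report their
wish `x_{i,1}`. Any exchange respecting the comb in which some black agent trades horizontally
is `π_H`; any other nonempty one contains a vertical cycle `(bᵢ, x_{i,1}, …)`. On `W_∅` no
vertical cycle is feasible, and a mechanism with a finite approximation ratio cannot output
the empty exchange, so `f(W_∅) = π_H`. Adding `i` to `T`, truthfulness guarantees `bᵢ` at least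
its utility `λ(h)` under `π_H`, which rules out both the empty outcome and `bᵢ`'s vertical
cycle (worth `λ(v) < λ(h)`), so the output stays `π_H`. Taking `T` to be all blacks gives `W`.
-/

open Equiv Equiv.Perm

lemma card_support_cycleOf_of_semiconj {α β : Type*} [Fintype α] [DecidableEq α] [Fintype β]
    [DecidableEq β] {σ : Perm α} {τ : Perm β} (hτ : τ.IsCycle) (hτs : τ.support = univ)
    (g : β ↪ α) (hg : ∀ b, σ (g b) = g (τ b)) (b : β) :
    #(σ.cycleOf (g b)).support = Fintype.card β := by
  have hpow (m : ℕ) (b : β) : (σ ^ m) (g b) = g ((τ ^ m) b) := by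
    simpa only [coe_pow] using (Function.Semiconj.iterate_right (fun b => (hg b).symm) m b).symm
  have hτb (b : β) : τ b ≠ b := mem_support.mp (hτs ▸ mem_univ b)
  suffices (σ.cycleOf (g b)).support = univ.map g by rw [this, card_map, card_univ]
  ext y
  rw [mem_support_cycleOf_iff' (by rw [hg]; exact g.injective.ne (hτb b)), mem_map]
  constructor
  · intro hy
    obtain ⟨m, rfl⟩ := hy.exists_nat_pow_eq
    exact ⟨(τ ^ m) b, mem_univ _, (hpow m b).symm⟩
  · rintro ⟨b', -, rfl⟩
    obtain ⟨m, hm⟩ := hτ.exists_pow_eq (hτb b) (hτb b')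
    exact ⟨m, by rw [zpow_natCast, hpow, hm]⟩

lemma finRotate_apply_ne {m : ℕ} (hm : 2 ≤ m) (a : Fin m) : finRotate m a ≠ a :=
  mem_support.mp (support_finRotate_of_le hm ▸ mem_univ a)

section Transport

variable {α : Type*} {n : ℕ}

def wishListCongr (e : α ≃ Fin n) (W : α → Finset α) : Fin n → Finset (Fin n) :=
  fun a => (W (e.symm a)).image e

lemma isWishList_wishListCongr (e : α ≃ Fin n) (W : α → Finset α) :
    IsWishList (wishListCongr e W) ↔ ∀ p, p ∉ W p := by
  simp [IsWishList, wishListCongr, ← e.forall_congr_right]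

lemma sameCycle_permCongr_s7 (e : α ≃ Fin n) (σ : Perm α) {p q : α} :
    (e.permCongr σ).SameCycle (e p) (e q) ↔ σ.SameCycle p q := by
  have hpow (m : ℤ) : e.permCongr σ ^ m = e.permCongr (σ ^ m) := (map_zpow e.permCongrHom σ m).symm
  simp [SameCycle, hpow]

lemma permCongr_eq_one_iff (e : α ≃ Fin n) {σ : Perm α} : e.permCongr σ = 1 ↔ σ = 1 :=
  map_eq_one_iff e.permCongrHom e.permCongrHom.injective

variable [Fintype α] [DecidableEq α]

lemma cycLen_permCongr (e : α ≃ Fin n) (σ : Perm α) (p : α) :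
    cycLen (e.permCongr σ) (e p) = #(σ.cycleOf p).support := by
  suffices ((e.permCongr σ).cycleOf (e p)).support = (σ.cycleOf p).support.map e.toEmbedding by
    rw [cycLen, this, card_map]
  ext y
  obtain ⟨q, rfl⟩ := e.surjective y
  rw [show e q = e.toEmbedding q from rfl, mem_map', mem_support_cycleOf_iff,
    mem_support_cycleOf_iff, coe_toEmbedding, sameCycle_permCongr_s7, mem_support, mem_support,
    permCongr_apply, symm_apply_apply, e.injective.ne_iff]

lemma utility_permCongr (lam : ℕ → ℝ) (e : α ≃ Fin n) (σ : Perm α) (p : α) :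
    utility lam (e.permCongr σ) (e p) = if σ p ≠ p then lam #(σ.cycleOf p).support else 0 := by
  simp [utility, cycLen_permCongr]

lemma feasible_wishListCongr (k : ℕ) (e : α ≃ Fin n) (W : α → Finset α) (σ : Perm α) :
    Feasible k (wishListCongr e W) (e.permCongr σ) ↔
      ∀ p, σ p ≠ p → σ p ∈ W p ∧ #(σ.cycleOf p).support ≤ k := by
  simp [Feasible, wishListCongr, ← e.forall_congr_right, cycLen_permCongr]

lemma IsMechanism.exists_permCongr_eq {k : ℕ} {f : Mechanism} (hmech : IsMechanism k f)
    (e : α ≃ Fin n) {W : α → Finset α} (hW : ∀ p, p ∉ W p) :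
    ∃ σ : Perm α, f n (wishListCongr e W) = e.permCongr σ ∧
      ∀ p, σ p ≠ p → σ p ∈ W p ∧ #(σ.cycleOf p).support ≤ k := by
  refine ⟨e.permCongr.symm (f n (wishListCongr e W)), (e.permCongr.apply_symm_apply _).symm, ?_⟩
  rw [← feasible_wishListCongr, apply_symm_apply]
  exact hmech n _ ((isWishList_wishListCongr e W).mpr hW)

end Transport

section Mechanism

variable {k n : ℕ} {lam : ℕ → ℝ} {W : Fin n → Finset (Fin n)} {π : Perm (Fin n)}

lemma utility_pos (hlam : IsLengthFunction k lam) (hπ : Feasible k W π) {i : Fin n}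
    (hi : π i ≠ i) : 0 < utility lam π i := by
  rw [utility, if_pos hi]
  exact (hlam.1 _ (two_le_card_support_cycleOf_iff.mpr hi) (hπ i hi).2).1

lemma utility_nonneg (hlam : IsLengthFunction k lam) (hπ : Feasible k W π) (i : Fin n) :
    0 ≤ utility lam π i := by
  by_cases hi : π i = i
  · simp [utility, hi]
  · exact (utility_pos hlam hπ hi).le

lemma SW_one_s7 : SW lam (1 : Perm (Fin n)) = 0 := by
  simp [SW, utility]

lemma SW_pos (hlam : IsLengthFunction k lam) (hπ : Feasible k W π) (hπ1 : π ≠ 1) :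
    0 < SW lam π := by
  obtain ⟨i, hi⟩ : ∃ i, π i ≠ i := by
    by_contra! h
    exact hπ1 (Equiv.ext h)
  exact sum_pos' (fun j _ => utility_nonneg hlam hπ j) ⟨i, mem_univ i, utility_pos hlam hπ hi⟩

lemma ApproxRatio.ne_one {f : Mechanism} {r : ℝ} (happrox : ApproxRatio k lam f r)
    (hlam : IsLengthFunction k lam) (hW : IsWishList W) (hπ : Feasible k W π) (hπ1 : π ≠ 1) :
    f n W ≠ 1 := by
  intro hf
  have hr : 0 < 1 / r := one_div_pos.mpr (one_pos.trans_le happrox.1)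
  have := happrox.2 n W hW π hπ
  rw [hf, SW_one_s7] at this
  nlinarith [SW_pos hlam hπ hπ1]

lemma Truthful.utility_le {f : Mechanism} (htruth : Truthful k lam f)
    {W' : Fin n → Finset (Fin n)} (hW' : IsWishList W') (hsub : ∀ j, W j ⊆ W' j) {i : Fin n}
    (hagree : ∀ j ≠ i, W j = W' j) : utility lam (f n W) i ≤ utility lam (f n W') i := by
  have hupdate : Function.update W i (W' i) = W' :=
    ((Function.eq_update_iff).mpr ⟨rfl, fun j hj => (hagree j hj).symm⟩).symm
  simpa [hupdate] using htruth n W' W hW' hsub i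

end Mechanism

section Comb

variable {h v : ℕ}

/-- The comb wish lists in which the black agents outside `T` have dropped `x_{i,1}`. -/
def partialCombW (h v : ℕ) (T : Finset (Fin h)) (p : Fin h × Fin v) : Finset (Fin h × Fin v) :=
  if p.2.val = 0 ∧ p.1 ∉ T then {(finRotate h p.1, p.2)} else combW h v p

lemma partialCombW_univ : partialCombW h v univ = combW h v := by
  funext p
  simp [partialCombW]

variable [NeZero v]

lemma mem_combW {p q : Fin h × Fin v} :
    q ∈ combW h v p ↔ (p.2 = 0 ∧ q = (finRotate h p.1, 0)) ∨ q = (p.1, finRotate v p.2) := by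
  by_cases hp : p.2 = 0 <;> simp [combW, hp, Fin.val_eq_zero_iff]

lemma notMem_combW (hh : 2 ≤ h) (hv : 2 ≤ v) (p : Fin h × Fin v) : p ∉ combW h v p := by
  rw [mem_combW]
  rintro (⟨-, hp⟩ | hp)
  · exact finRotate_apply_ne hh p.1 (congrArg Prod.fst hp).symm
  · exact finRotate_apply_ne hv p.2 (congrArg Prod.snd hp).symm

lemma piH_apply_black (i : Fin h) : piH h v (i, 0) = (finRotate h i, 0) := by
  simp [piH]

lemma piH_apply_white (i : Fin h) {j : Fin v} (hj : j ≠ 0) : piH h v (i, j) = (i, j) := by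
  simp [piH, Fin.val_eq_zero_iff, hj]

lemma card_support_cycleOf_piH (hh : 2 ≤ h) (i : Fin h) :
    #((piH h v).cycleOf (i, 0)).support = h := by
  simpa using card_support_cycleOf_of_semiconj (isCycle_finRotate_of_le hh)
    (support_finRotate_of_le hh) (Function.Embedding.sectL (Fin h) (0 : Fin v))
    (fun i => piH_apply_black i) i

lemma partialCombW_subset_combW (T : Finset (Fin h)) (p : Fin h × Fin v) :
    partialCombW h v T p ⊆ combW h v p := by
  unfold partialCombW
  split_ifs with hp
  · simp [combW, hp.1]
  · rfl

lemma partialCombW_subset_insert (T : Finset (Fin h)) (i : Fin h) (p : Fin h × Fin v) :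
    partialCombW h v T p ⊆ partialCombW h v (insert i T) p := by
  unfold partialCombW
  by_cases hI : p.2.val = 0 ∧ p.1 ∉ insert i T
  · rw [if_pos hI, if_pos ⟨hI.1, fun hT => hI.2 (mem_insert_of_mem hT)⟩]
  · rw [if_neg hI]
    split_ifs with hT
    · simp [combW, hT.1]
    · rfl

lemma partialCombW_insert_of_ne {T : Finset (Fin h)} {i : Fin h} {p : Fin h × Fin v}
    (hp : p ≠ (i, 0)) : partialCombW h v (insert i T) p = partialCombW h v T p := by
  have : p.2.val = 0 → p.1 ≠ i := fun h0 h1 => hp (Prod.ext h1 (Fin.ext h0))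
  simp only [partialCombW, mem_insert]
  grind

lemma partialCombW_black_of_notMem {T : Finset (Fin h)} {i : Fin h} (hi : i ∉ T) :
    partialCombW h v T (i, 0) = {(finRotate h i, 0)} := by
  simp [partialCombW, hi]

lemma notMem_partialCombW (hh : 2 ≤ h) (hv : 2 ≤ v) (T : Finset (Fin h)) (p : Fin h × Fin v) :
    p ∉ partialCombW h v T p :=
  fun hp => notMem_combW hh hv p (partialCombW_subset_combW T p hp)

variable {σ : Perm (Fin h × Fin v)}

lemma piH_ne_one (hh : 2 ≤ h) : piH h v ≠ 1 := fun h1 =>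
  finRotate_apply_ne hh ⟨0, by omega⟩
    (congrArg Prod.fst ((piH_apply_black (v := v) _).symm.trans (by rw [h1])))

lemma piH_feasible (hh : 2 ≤ h) {k : ℕ} (hhk : h ≤ k) (T : Finset (Fin h)) (p : Fin h × Fin v)
    (hp : piH h v p ≠ p) :
    piH h v p ∈ partialCombW h v T p ∧ #((piH h v).cycleOf p).support ≤ k := by
  obtain ⟨i, j⟩ := p
  obtain rfl : j = 0 := by
    by_contra hj
    exact hp (piH_apply_white i hj)
  rw [piH_apply_black, card_support_cycleOf_piH hh]
  refine ⟨?_, hhk⟩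
  unfold partialCombW
  split_ifs <;> simp [combW]

lemma eq_of_apply_eq_white (hσ : ∀ p, σ p ≠ p → σ p ∈ combW h v p) {q : Fin h × Fin v}
    {i : Fin h} {j : Fin v} (hj : finRotate v j ≠ 0) (hq : σ q = (i, finRotate v j))
    (hmove : σ q ≠ q) : q = (i, j) := by
  rcases mem_combW.mp (hσ q hmove) with ⟨-, hq'⟩ | hq'
  · exact absurd (congrArg Prod.snd (hq.symm.trans hq')) hj
  · rw [hq, Prod.mk.injEq, (finRotate v).injective.eq_iff] at hq'
    exact Prod.ext hq'.1.symm hq'.2.symm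

lemma apply_black_eq_vertical_of_white_moves (hσ : ∀ p, σ p ≠ p → σ p ∈ combW h v p)
    {i : Fin h} {j : Fin v} (hj : j ≠ 0) (hmove : σ (i, j) ≠ (i, j)) :
    σ (i, 0) = (i, finRotate v 0) := by
  obtain ⟨w, rfl⟩ : ∃ w, v = w + 1 := ⟨v - 1, (Nat.succ_pred_eq_of_ne_zero (NeZero.ne v)).symm⟩
  induction j using Fin.induction with
  | zero => exact absurd rfl hj
  | succ k ih =>
    have hrot : finRotate (w + 1) k.castSucc = k.succ := by
      rw [finRotate_apply, Fin.coeSucc_eq_succ]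
    set q := σ.symm (i, k.succ)
    have hq : σ q = (i, finRotate (w + 1) k.castSucc) := by rw [hrot]; exact σ.apply_symm_apply _
    have hqmove : σ q ≠ q := fun hfix => hmove (by simpa [q] using congrArg σ hfix)
    have hqeq := eq_of_apply_eq_white hσ (hrot ▸ Fin.succ_ne_zero k) hq hqmove
    rw [hqeq] at hq hqmove
    by_cases hk : k.castSucc = 0
    · rwa [hk] at hq
    · exact ih hk hqmove

lemma apply_eq_vertical_of_black_vertical (hσ : ∀ p, σ p ≠ p → σ p ∈ combW h v p)
    {i : Fin h} (hi : σ (i, 0) = (i, finRotate v 0)) (j : Fin v) :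
    σ (i, j) = (i, finRotate v j) := by
  obtain ⟨w, rfl⟩ : ∃ w, v = w + 1 := ⟨v - 1, (Nat.succ_pred_eq_of_ne_zero (NeZero.ne v)).symm⟩
  induction j using Fin.induction with
  | zero => exact hi
  | succ k ih =>
    rw [finRotate_apply, Fin.coeSucc_eq_succ] at ih
    have hmove : σ (i, k.succ) ≠ (i, k.succ) := fun hfix =>
      Fin.castSucc_lt_succ.ne (congrArg Prod.snd (σ.injective (ih.trans hfix.symm)))
    rcases mem_combW.mp (hσ _ hmove) with ⟨hk, -⟩ | hvert
    · exact absurd hk (Fin.succ_ne_zero k)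
    · exact hvert

lemma card_support_cycleOf_of_vertical (hv : 2 ≤ v) {i : Fin h}
    (hcol : ∀ j, σ (i, j) = (i, finRotate v j)) : #(σ.cycleOf (i, 0)).support = v := by
  simpa using card_support_cycleOf_of_semiconj (isCycle_finRotate_of_le hv)
    (support_finRotate_of_le hv) (Function.Embedding.sectR i (Fin v)) hcol 0

lemma apply_black_finRotate_eq_horizontal (hσ : ∀ p, σ p ≠ p → σ p ∈ combW h v p)
    (hh : 2 ≤ h) {i : Fin h} (hi : σ (i, 0) = (finRotate h i, 0)) :
    σ (finRotate h i, 0) = (finRotate h (finRotate h i), 0) := by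
  have hmove : σ (finRotate h i, 0) ≠ (finRotate h i, 0) := fun hfix =>
    finRotate_apply_ne hh i (congrArg Prod.fst (σ.injective (hi.trans hfix.symm))).symm
  rcases mem_combW.mp (hσ _ hmove) with ⟨-, hhor⟩ | hvert
  · exact hhor
  · -- a vertical cycle through `b_{i+1}` would need a second agent sent to `b_{i+1}`
    have hlast := apply_eq_vertical_of_black_vertical hσ hvert ((finRotate v).symm 0)
    rw [apply_symm_apply, ← hi] at hlast
    exact absurd (congrArg Prod.fst (σ.injective hlast)) (finRotate_apply_ne hh i)

lemma apply_black_eq_horizontal (hσ : ∀ p, σ p ≠ p → σ p ∈ combW h v p) (hh : 2 ≤ h)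
    {i₀ : Fin h} (hi₀ : σ (i₀, 0) = (finRotate h i₀, 0)) (i : Fin h) :
    σ (i, 0) = (finRotate h i, 0) := by
  obtain ⟨m, rfl⟩ := (isCycle_finRotate_of_le hh).exists_pow_eq
    (finRotate_apply_ne hh i₀) (finRotate_apply_ne hh i)
  induction m with
  | zero => exact hi₀
  | succ m ih =>
    rw [pow_succ', mul_apply]
    exact apply_black_finRotate_eq_horizontal hσ hh ih

lemma eq_piH_of_apply_black_eq_horizontal (hσ : ∀ p, σ p ≠ p → σ p ∈ combW h v p)
    (hh : 2 ≤ h) (hv : 2 ≤ v) {i₀ : Fin h} (hi₀ : σ (i₀, 0) = (finRotate h i₀, 0)) :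
    σ = piH h v := by
  have hblack := apply_black_eq_horizontal hσ hh hi₀
  ext1 ⟨i, j⟩
  by_cases hj : j = 0
  · rw [hj, hblack, piH_apply_black]
  · rw [piH_apply_white i hj]
    by_contra hmove
    have hvert := (hblack i).symm.trans (apply_black_eq_vertical_of_white_moves hσ hj hmove)
    exact finRotate_apply_ne hv 0 (congrArg Prod.snd hvert).symm

lemma eq_piH_or_vertical_of_black_moves (hσ : ∀ p, σ p ≠ p → σ p ∈ combW h v p)
    (hh : 2 ≤ h) (hv : 2 ≤ v) {i : Fin h} (hi : σ (i, 0) ≠ (i, 0)) :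
    σ = piH h v ∨ ∀ j, σ (i, j) = (i, finRotate v j) := by
  rcases mem_combW.mp (hσ _ hi) with ⟨-, hhor⟩ | hvert
  · exact .inl (eq_piH_of_apply_black_eq_horizontal hσ hh hv hhor)
  · exact .inr (apply_eq_vertical_of_black_vertical hσ hvert)

lemma exists_black_moves (hσ : ∀ p, σ p ≠ p → σ p ∈ combW h v p) (hv : 2 ≤ v) (hσ1 : σ ≠ 1) :
    ∃ i, σ (i, 0) ≠ (i, 0) := by
  obtain ⟨⟨i, j⟩, hmove⟩ : ∃ p, σ p ≠ p := by
    by_contra! hfix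
    exact hσ1 (Equiv.ext hfix)
  refine ⟨i, ?_⟩
  by_cases hj : j = 0
  · rwa [hj] at hmove
  · rw [apply_black_eq_vertical_of_white_moves hσ hj hmove]
    exact fun hfix => finRotate_apply_ne hv 0 (congrArg Prod.snd hfix)

end Comb

section CombMechanism

variable {k n h v : ℕ} [NeZero v] {lam : ℕ → ℝ} {f : Mechanism}

lemma apply_partialCombW_empty_eq_piH (hh : 2 ≤ h) (hv : 2 ≤ v) (hhk : h ≤ k)
    (hlam : IsLengthFunction k lam) (hmech : IsMechanism k f) {r : ℝ}
    (happrox : ApproxRatio k lam f r) (e : Fin h × Fin v ≃ Fin n) :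
    f n (wishListCongr e (partialCombW h v ∅)) = e.permCongr (piH h v) := by
  obtain ⟨σ, hfσ, hσ⟩ := hmech.exists_permCongr_eq e (notMem_partialCombW hh hv ∅)
  have hσcomb p (hp : σ p ≠ p) : σ p ∈ combW h v p := partialCombW_subset_combW ∅ p (hσ p hp).1
  have hσ1 : σ ≠ 1 := by
    rw [Ne, ← permCongr_eq_one_iff e, ← hfσ]
    exact happrox.ne_one hlam ((isWishList_wishListCongr e _).mpr (notMem_partialCombW hh hv ∅))
      ((feasible_wishListCongr k e _ _).mpr (piH_feasible hh hhk ∅))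
      ((permCongr_eq_one_iff e).not.mpr (piH_ne_one hh))
  obtain ⟨i, hi⟩ := exists_black_moves hσcomb hv hσ1
  rcases eq_piH_or_vertical_of_black_moves hσcomb hh hv hi with hpiH | hvert
  · rw [hfσ, hpiH]
  · have hhor := (hσ _ hi).1
    rw [partialCombW_black_of_notMem (notMem_empty i), mem_singleton, hvert] at hhor
    exact absurd (congrArg Prod.snd hhor) (finRotate_apply_ne hv 0)

lemma apply_partialCombW_insert_eq_piH (hh : 2 ≤ h) (hv : 2 ≤ v) (hlamh : 0 < lam h)
    (hlt : lam v < lam h) (hmech : IsMechanism k f) (htruth : Truthful k lam f)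
    (e : Fin h × Fin v ≃ Fin n) {T : Finset (Fin h)} {i : Fin h}
    (ih : f n (wishListCongr e (partialCombW h v T)) = e.permCongr (piH h v)) :
    f n (wishListCongr e (partialCombW h v (insert i T))) = e.permCongr (piH h v) := by
  obtain ⟨σ, hfσ, hσ⟩ := hmech.exists_permCongr_eq e (notMem_partialCombW hh hv (insert i T))
  have hσcomb p (hp : σ p ≠ p) : σ p ∈ combW h v p := partialCombW_subset_combW _ p (hσ p hp).1
  have htr : lam h ≤ utility lam (e.permCongr σ) (e (i, 0)) := by
    have hagree (a) (ha : a ≠ e (i, 0)) : wishListCongr e (partialCombW h v T) a =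
        wishListCongr e (partialCombW h v (insert i T)) a := by
      rw [wishListCongr, wishListCongr, partialCombW_insert_of_ne (e.symm_apply_eq.not.mpr ha)]
    have := htruth.utility_le (W := wishListCongr e (partialCombW h v T))
      ((isWishList_wishListCongr e _).mpr (notMem_partialCombW hh hv _))
      (fun a => image_subset_image (partialCombW_subset_insert T i _)) hagree
    rwa [ih, hfσ, utility_permCongr, card_support_cycleOf_piH hh, if_pos (by
      simpa [piH_apply_black] using finRotate_apply_ne hh i)] at this
  rw [utility_permCongr] at htr
  by_cases hi : σ (i, 0) = (i, 0)
  · rw [if_neg (not_not_intro hi)] at htr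
    linarith
  rcases eq_piH_or_vertical_of_black_moves hσcomb hh hv hi with hpiH | hvert
  · rw [hfσ, hpiH]
  · rw [if_pos hi, card_support_cycleOf_of_vertical hv hvert] at htr
    linarith

end CombMechanism

theorem truthful_mechanism_comb_output_general
    (k : ℕ) (lam : ℕ → ℝ) (hlam : IsLengthFunction k lam)
    (h v : ℕ) (hh : 2 ≤ h) (hhv : h < v) (hvk : v ≤ k) (hlt : lam v < lam h)
    (f : Mechanism) (hmech : IsMechanism k f) (htruth : Truthful k lam f)
    (r : ℝ) (happrox : ApproxRatio k lam f r) :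
    f (h * v)
        (fun a => (combW h v (finProdFinEquiv.symm a)).image finProdFinEquiv)
      = finProdFinEquiv.permCongr (piH h v) := by
  have hv : 2 ≤ v := by omega
  have : NeZero v := ⟨by omega⟩
  have hlamh : 0 < lam h := (hlam.1 h hh (by omega)).1
  have key (T : Finset (Fin h)) : f (h * v) (wishListCongr finProdFinEquiv (partialCombW h v T))
      = finProdFinEquiv.permCongr (piH h v) := by
    induction T using Finset.induction_on with
    | empty => exact apply_partialCombW_empty_eq_piH hh hv (by omega) hlam hmech happrox _
    | insert i T _ ih => exact apply_partialCombW_insert_eq_piH hh hv hlamh hlt hmech htruth _ ih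
  have hcomb := key univ
  rw [partialCombW_univ] at hcomb
  exact hcomb

/-- Lemma: every truthful mechanism outputs `π_H` on the comb.
Let `k ≥ 3`, let `λ` be a (non-uniform) length function, and let `2 ≤ h < v ≤ k` with
`λ(v) < λ(h)`.  Then every truthful `(k,λ)`-BE mechanism `f` admitting some
approximation ratio `r ≥ 1` outputs, on the `(h,v)`-comb wish list vector,
exactly the exchange `π_H` (transported to `Fin (h·v)` along `finProdFinEquiv`). -/
theorem truthful_mechanism_comb_output
    (k : ℕ) (hk : 3 ≤ k) (lam : ℕ → ℝ) (hlam : IsLengthFunction k lam)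
    (h v : ℕ) (hh : 2 ≤ h) (hhv : h < v) (hvk : v ≤ k) (hlt : lam v < lam h)
    (f : Mechanism) (hmech : IsMechanism k f) (htruth : Truthful k lam f)
    (r : ℝ) (happrox : ApproxRatio k lam f r) :
    f (h * v)
        (fun a => (combW h v (finProdFinEquiv.symm a)).image finProdFinEquiv)
      = finProdFinEquiv.permCongr (piH h v) :=
  truthful_mechanism_comb_output_general k lam hlam h v hh hhv hvk hlt f hmech htruth r happrox

end

end BarterExchange
end

section
/- Let P = (A ⊎ B, E) be a finite connected bipartite graph with parts A and B, with A nonempty, and let k ≥ 2 be an integer and w : A ∪ B → {2,3,…,k} a weight function satisfying w(a) ≥ deg_P(a) for every node a ∈ A. Then w(B) ≤ w(A)·(k − 1 + 1/|A|). Moreover, if there exists a node a ∈ A with w(a) > deg_P(a), then w(B) ≤ w(A)·(k − 1). Here w(A) = Σ_{a∈A} w(a) and w(B) = Σ_{b∈B} w(b), and deg_P denotes vertex degree in P. -/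
/-!
A connected graph on at least `|A| + |B|` vertices has at least `|A| + |B| - 1` edges, and since `A` is a
vertex cover their number is at most `Σ_{a ∈ A} deg a ≤ w(A)`. Hence `|B| ≤ w(A) + 1 - |A|`, and
`w(B) ≤ k |B|` together with `w(A) ≤ k |A|` gives the first bound. A node `a` with
`deg a < w a` improves `|B|` to `w(A) - |A|`, which gives the second.
-/

open Finset

namespace SimpleGraph

variable {V : Type*} [Fintype V] [DecidableEq V] {G : SimpleGraph V} [DecidableRel G.Adj]

theorem IsVertexCover.card_edgeFinset_le_sum_degree {c : Finset V} (hc : G.IsVertexCover c) :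
    #G.edgeFinset ≤ ∑ v ∈ c, G.degree v := by
  have hsub : G.edgeFinset ⊆ c.biUnion fun v => G.incidenceFinset v := by
    intro e he
    induction e with
    | h u x =>
      rw [mem_edgeFinset, mem_edgeSet] at he
      simp only [mem_biUnion, mem_incidenceFinset]
      rcases hc he with hu | hx
      · exact ⟨u, hu, he, Sym2.mem_mk_left u x⟩
      · exact ⟨x, hx, he, Sym2.mem_mk_right u x⟩
  calc #G.edgeFinset ≤ #(c.biUnion fun v => G.incidenceFinset v) := card_le_card hsub
    _ ≤ ∑ v ∈ c, #(G.incidenceFinset v) := card_biUnion_le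
    _ = ∑ v ∈ c, G.degree v := by simp only [card_incidenceFinset_eq_degree]

theorem Connected.card_add_card_le_sum_degree_add_one (hG : G.Connected) {A B : Finset V}
    (hAB : Disjoint A B) (hA : G.IsVertexCover A) :
    #A + #B ≤ ∑ a ∈ A, G.degree a + 1 :=
  calc #A + #B = #(A ∪ B) := (card_union_of_disjoint hAB).symm
    _ ≤ Fintype.card V := card_le_univ _
    _ ≤ #G.edgeFinset + 1 := by
      simpa [Nat.card_eq_fintype_card, edgeFinset_card] using
        hG.card_vert_le_card_edgeSet_add_one
    _ ≤ ∑ a ∈ A, G.degree a + 1 := by gcongr; exact hA.card_edgeFinset_le_sum_degree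

end SimpleGraph

section WeightArithmetic

variable {n m W W' k : ℝ}

theorem le_mul_sub_one_add_inv_of_add_le_add_one (hn : 1 ≤ n) (hk : 0 ≤ k) (hW : W ≤ k * n)
    (hW' : W' ≤ k * m) (hnm : n + m ≤ W + 1) : W' ≤ W * (k - 1 + 1 / n) := by
  have hn0 : 0 < n := by linarith
  -- `k (W + 1 - n) ≤ W (k - 1 + 1/n)` is `(n - 1)(k n - W) ≥ 0` after multiplying by `n`.
  have key : k * (W + 1 - n) * n ≤ W * (k - 1 + 1 / n) * n := by
    field_simp
    nlinarith [mul_nonneg (sub_nonneg.2 hn) (sub_nonneg.2 hW)]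
  calc W' ≤ k * m := hW'
    _ ≤ k * (W + 1 - n) := by gcongr; linarith
    _ ≤ W * (k - 1 + 1 / n) := le_of_mul_le_mul_right key hn0

theorem le_mul_sub_one_of_add_le (hk : 0 ≤ k) (hW : W ≤ k * n) (hW' : W' ≤ k * m)
    (hnm : n + m ≤ W) : W' ≤ W * (k - 1) :=
  calc W' ≤ k * m := hW'
    _ ≤ k * (W - n) := by gcongr; linarith
    _ ≤ W * (k - 1) := by linarith

end WeightArithmetic

theorem sum_cast_le_mul_card {ι : Type*} (s : Finset ι) (w : ι → ℕ) {k : ℕ}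
    (hw : ∀ x ∈ s, w x ≤ k) : ∑ x ∈ s, (w x : ℝ) ≤ k * #s := by
  have := sum_le_card_nsmul s (fun x => (w x : ℝ)) k (fun x hx => by exact_mod_cast hw x hx)
  simpa [mul_comm] using this

theorem bipartite_weight_bound_general
    {V : Type} [Fintype V] [DecidableEq V]
    (P : SimpleGraph V) [DecidableRel P.Adj]
    (A B : Finset V)
    (hdisj : Disjoint A B)
    (hbip : ∀ u x : V, P.Adj u x → (u ∈ A ∧ x ∈ B) ∨ (u ∈ B ∧ x ∈ A))
    (hconn : P.Connected)
    (hA : A.Nonempty)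
    (k : ℕ)
    (w : V → ℕ) (hw : ∀ x : V, 2 ≤ w x ∧ w x ≤ k)
    (hdeg : ∀ a ∈ A, P.degree a ≤ w a) :
    (∑ b ∈ B, (w b : ℝ)) ≤ (∑ a ∈ A, (w a : ℝ)) * ((k : ℝ) - 1 + 1 / (A.card : ℝ)) ∧
      ((∃ a ∈ A, P.degree a < w a) →
        (∑ b ∈ B, (w b : ℝ)) ≤ (∑ a ∈ A, (w a : ℝ)) * ((k : ℝ) - 1)) := by
  have hcover : P.IsVertexCover A := fun u x h => (hbip u x h).imp (·.1) (·.2)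
  have hcount := hconn.card_add_card_le_sum_degree_add_one hdisj hcover
  have hWA := sum_cast_le_mul_card A w fun x _ => (hw x).2
  have hWB := sum_cast_le_mul_card B w fun x _ => (hw x).2
  have hn : (1 : ℝ) ≤ #A := by exact_mod_cast hA.card_pos
  refine ⟨le_mul_sub_one_add_inv_of_add_le_add_one hn k.cast_nonneg hWA hWB ?_, ?_⟩
  · have : #A + #B ≤ ∑ a ∈ A, w a + 1 := hcount.trans (by gcongr with a ha; exact hdeg a ha)
    exact_mod_cast this
  · rintro ⟨a, ha, hlt⟩
    have hstrict : ∑ a ∈ A, P.degree a < ∑ a ∈ A, w a := sum_lt_sum hdeg ⟨a, ha, hlt⟩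
    refine le_mul_sub_one_of_add_le k.cast_nonneg hWA hWB ?_
    have : #A + #B ≤ ∑ a ∈ A, w a := by omega
    exact_mod_cast this

/-- Proposition: combinatorial property of connected bipartite graphs.
Let `P` be a finite connected bipartite graph with parts `A` (nonempty) and `B`, let
`k ≥ 2`, and let `w` be a weight function into `{2,…,k}` with `w(a) ≥ deg_P(a)` for all
`a ∈ A`.  Then `w(B) ≤ w(A)·(k − 1 + 1/|A|)`; moreover, if `w(a) > deg_P(a)` for some
`a ∈ A`, then `w(B) ≤ w(A)·(k − 1)`. -/
theorem bipartite_weight_bound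
    {V : Type} [Fintype V] [DecidableEq V]
    (P : SimpleGraph V) [DecidableRel P.Adj]
    (A B : Finset V)
    (hcover : ∀ x : V, x ∈ A ∨ x ∈ B)
    (hdisj : Disjoint A B)
    (hbip : ∀ u x : V, P.Adj u x → (u ∈ A ∧ x ∈ B) ∨ (u ∈ B ∧ x ∈ A))
    (hconn : P.Connected)
    (hA : A.Nonempty)
    (k : ℕ) (hk : 2 ≤ k)
    (w : V → ℕ) (hw : ∀ x : V, 2 ≤ w x ∧ w x ≤ k)
    (hdeg : ∀ a ∈ A, P.degree a ≤ w a) :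
    (∑ b ∈ B, (w b : ℝ)) ≤ (∑ a ∈ A, (w a : ℝ)) * ((k : ℝ) - 1 + 1 / (A.card : ℝ)) ∧
      ((∃ a ∈ A, P.degree a < w a) →
        (∑ b ∈ B, (w b : ℝ)) ≤ (∑ a ∈ A, (w a : ℝ)) * ((k : ℝ) - 1)) :=
  bipartite_weight_bound_general P A B hdisj hbip hconn hA k w hw hdeg
end

section
/- Let G = (V,E) be a k-cycle graph over n agents and let I be a greedy-stable independent set in G. Then for every independent set J in G there exists a function μ : J → I such that (1) |α(u)| ≥ |α(μ(u))| for every node u ∈ J, and (2) |μ⁻¹(v)| ≤ |α(v)| for every node v ∈ I, where μ⁻¹(v) = { u ∈ J : μ(u) = v }. -/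
/-!
The `k`-cycle graph framework of Emek–Shpiro, "Barter Exchange with Bounded
Trading Cycles": a `k`-cycle graph over `n` agents is a finite simple graph whose
nodes `v` are labeled by agent sets `α(v) ⊆ [n]` with `2 ≤ |α(v)| ≤ k`, two distinct
nodes being adjacent iff their labels intersect.
-/

open Finset

/-- A `k`-cycle graph over `n` agents. -/
structure CycleGraph (n k : ℕ) where
  /-- the node set -/
  V : Type
  fintypeV : Fintype V
  decEqV : DecidableEq V
  /-- the agent label of each node -/
  alpha : V → Finset (Fin n)
  two_le_card : ∀ v, 2 ≤ (alpha v).card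
  card_le_k : ∀ v, (alpha v).card ≤ k

attribute [instance] CycleGraph.fintypeV CycleGraph.decEqV

namespace CycleGraph

variable {n k : ℕ}

/-- Adjacency: distinct nodes whose agent labels intersect. -/
def Adj (G : CycleGraph n k) (u v : G.V) : Prop :=
  u ≠ v ∧ ((G.alpha u) ∩ (G.alpha v)).Nonempty

instance (G : CycleGraph n k) : DecidableRel G.Adj := fun u v =>
  inferInstanceAs (Decidable (u ≠ v ∧ ((G.alpha u) ∩ (G.alpha v)).Nonempty))

/-- Independent set: pairwise non-adjacent nodes, i.e., pairwise disjoint labels. -/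
def Indep (G : CycleGraph n k) (I : Finset G.V) : Prop :=
  ∀ u ∈ I, ∀ v ∈ I, u ≠ v → G.alpha u ∩ G.alpha v = ∅

instance (G : CycleGraph n k) (I : Finset G.V) : Decidable (G.Indep I) :=
  inferInstanceAs (Decidable (∀ u ∈ I, ∀ v ∈ I, u ≠ v → G.alpha u ∩ G.alpha v = ∅))

end CycleGraph

/-- An independent set `I` is greedy-stable if every node outside `I` has a neighbor in
`I` of no larger label cardinality (the defining property of the output of the greedy
algorithm that adds non-conflicting nodes in non-decreasing order of `|α(·)|`). -/
def CycleGraph.GreedyStable {n k : ℕ} (G : CycleGraph n k) (I : Finset G.V) : Prop :=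
  G.Indep I ∧
    ∀ u : G.V, u ∉ I → ∃ v ∈ I, G.Adj u v ∧ (G.alpha v).card ≤ (G.alpha u).card

/-
Map each node of `J` lying in `I` to itself and every other node to a neighbor in `I` of
no larger label size, as greedy stability provides. The nodes of `J` sent to `v ∈ I` all
meet `α(v)` and have pairwise disjoint labels, so there are at most `|α(v)|` of them.
-/

theorem Finset.card_le_card_of_pairwiseDisjoint_of_inter_nonempty {ι α : Type*}
    [DecidableEq α] {f : ι → Finset α} {J : Finset ι} {s : Finset α}
    (hJ : (J : Set ι).PairwiseDisjoint f) (hs : ∀ u ∈ J, (f u ∩ s).Nonempty) :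
    #J ≤ #s :=
  calc #J = ∑ _u ∈ J, 1 := card_eq_sum_ones J
    _ ≤ ∑ u ∈ J, #(f u ∩ s) := sum_le_sum fun u hu => (hs u hu).card_pos
    _ = #(J.biUnion fun u => f u ∩ s) :=
        (card_biUnion fun _ hu _ hv huv =>
          (hJ hu hv huv).mono inter_subset_left inter_subset_left).symm
    _ ≤ #s := card_le_card (biUnion_subset.2 fun _ _ => inter_subset_right)

namespace CycleGraph

variable {n k : ℕ} {G : CycleGraph n k}

theorem alpha_nonempty (G : CycleGraph n k) (v : G.V) : (G.alpha v).Nonempty :=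
  card_pos.1 (by have := G.two_le_card v; omega)

theorem Indep.pairwiseDisjoint {J : Finset G.V} (hJ : G.Indep J) :
    (J : Set G.V).PairwiseDisjoint G.alpha := fun u hu v hv huv =>
  disjoint_iff_inter_eq_empty.2 (hJ u hu v hv huv)

theorem GreedyStable.exists_map {I : Finset G.V} (hI : G.GreedyStable I) :
    ∃ μ : G.V → G.V, ∀ u, μ u ∈ I ∧ #(G.alpha (μ u)) ≤ #(G.alpha u) ∧
      (G.alpha u ∩ G.alpha (μ u)).Nonempty := by
  have hchoice : ∀ u, ∃ v ∈ I, #(G.alpha v) ≤ #(G.alpha u) ∧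
      (G.alpha u ∩ G.alpha v).Nonempty := by
    intro u
    by_cases hu : u ∈ I
    · exact ⟨u, hu, le_rfl, by rw [inter_self]; exact G.alpha_nonempty u⟩
    · obtain ⟨v, hv, hadj, hcard⟩ := hI.2 u hu
      exact ⟨v, hv, hcard, hadj.2⟩
  choose μ hμ using hchoice
  exact ⟨μ, hμ⟩

end CycleGraph

theorem greedyStable_mapping_general (n k : ℕ) (G : CycleGraph n k)
    (I : Finset G.V) (hI : G.GreedyStable I)
    (J : Finset G.V) (hJ : G.Indep J) :
    ∃ μ : G.V → G.V,
      (∀ u ∈ J, μ u ∈ I) ∧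
      (∀ u ∈ J, (G.alpha (μ u)).card ≤ (G.alpha u).card) ∧
      (∀ v ∈ I, (J.filter (fun u => μ u = v)).card ≤ (G.alpha v).card) := by
  obtain ⟨μ, hμ⟩ := hI.exists_map
  refine ⟨μ, fun u _ => (hμ u).1, fun u _ => (hμ u).2.1, fun v _ => ?_⟩
  refine card_le_card_of_pairwiseDisjoint_of_inter_nonempty
    (hJ.pairwiseDisjoint.subset (coe_subset.2 (filter_subset _ _))) fun u hu => ?_
  rw [← (mem_filter.1 hu).2]
  exact (hμ u).2.2

/-- Observation: greedy mapping.  If `I` is a greedy-stable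
independent set of a `k`-cycle graph `G`, then for every independent set `J` there is a
map `μ : J → I` with `|α(μ(u))| ≤ |α(u)|` for all `u ∈ J` and `|μ⁻¹(v)| ≤ |α(v)|` for
all `v ∈ I`. -/
theorem greedyStable_mapping (n k : ℕ) (hk : 2 ≤ k) (G : CycleGraph n k)
    (I : Finset G.V) (hI : G.GreedyStable I)
    (J : Finset G.V) (hJ : G.Indep J) :
    ∃ μ : G.V → G.V,
      (∀ u ∈ J, μ u ∈ I) ∧
      (∀ u ∈ J, (G.alpha (μ u)).card ≤ (G.alpha u).card) ∧
      (∀ v ∈ I, (J.filter (fun u => μ u = v)).card ≤ (G.alpha v).card) :=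
  greedyStable_mapping_general n k G I hI J hJ
end
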